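/- arXiv:1909.03381 — 9 statements merged into one kernel-verified Lean document; each statement's English description precedes it below -/
import Mathlib

section
/- Let T be a tree on n vertices and x a vertex of T. Then x is in the median of T (i.e., the status of x is minimum among all vertices) if and only if the branch-weight of x is at most n/2, where the branch-weight of x is the maximum number of vertices in a component of T - x. -/
open SimpleGraph

variable {V : Type*}

/-- The status of a vertex: sum of distances to all other vertices. -/
noncomputable def status [Fintype V] (G : SimpleGraph V) (u : V) : ℕ :=
  ∑ v : V, G.dist u v

/-- The minimum status of a graph. -/
noncomputable def minStatus [Fintype V] (G : SimpleGraph V) : ℕ :=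
  sInf (Set.range (status G))

/-- The matching number: maximum cardinality of a matching. -/
noncomputable def matchingNumber (G : SimpleGraph V) : ℕ :=
  sSup {k | ∃ M : G.Subgraph, M.IsMatching ∧ M.edgeSet.ncard = k}

/-- The domination number: minimum cardinality of a dominating set. -/
noncomputable def domNumber (G : SimpleGraph V) : ℕ :=
  sInf {k | ∃ S : Set V, (∀ v ∉ S, ∃ u ∈ S, G.Adj u v) ∧ S.ncard = k}

/-- The dumbbell `D_n(p,q)`: a path on `n - p - q` vertices `0, …, n-p-q-1`,
with `p` pendant vertices attached to vertex `0` and `q` pendant vertices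
attached to vertex `n-p-q-1`. -/
def dumbbell (n p q : ℕ) : SimpleGraph (Fin n) :=
  SimpleGraph.fromRel (fun a b =>
    ((a : ℕ) + 1 = (b : ℕ) ∧ (b : ℕ) < n - p - q) ∨
    ((a : ℕ) = 0 ∧ n - p - q ≤ (b : ℕ) ∧ (b : ℕ) < n - q) ∨
    ((a : ℕ) = n - p - q - 1 ∧ n - q ≤ (b : ℕ)))

/-- The tree `A_{n,m}`: a star with center `0` and leaves `1, …, n-m`, with one
pendant vertex `n-m+i` attached to leaf `i` for each `i = 1, …, m-1`. -/
def treeA (n m : ℕ) : SimpleGraph (Fin n) :=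
  SimpleGraph.fromRel (fun a b =>
    ((a : ℕ) = 0 ∧ 1 ≤ (b : ℕ) ∧ (b : ℕ) ≤ n - m) ∨
    (1 ≤ (a : ℕ) ∧ (a : ℕ) ≤ m - 1 ∧ (b : ℕ) = n - m + (a : ℕ)))

/-- The caterpillar `C_n(p,q)`: a path on vertices `0, …, n-p-q-1`; pendant
vertex `n-p-q+j` is attached to path vertex `j` for `j = 0, …, p-1`, and pendant
vertex `n-q+j` is attached to path vertex `n-p-2q+j` for `j = 0, …, q-1`. -/
def caterpillar (n p q : ℕ) : SimpleGraph (Fin n) :=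
  SimpleGraph.fromRel (fun a b =>
    ((a : ℕ) + 1 = (b : ℕ) ∧ (b : ℕ) < n - p - q) ∨
    (n - p - q ≤ (b : ℕ) ∧ (b : ℕ) < n - q ∧ (a : ℕ) = (b : ℕ) - (n - p - q)) ∨
    (n - q ≤ (b : ℕ) ∧ (a : ℕ) = (b : ℕ) - p - q))

/-- The branch-weight of a vertex `x` in a tree: the maximum number of vertices
of a component of `T - x`. -/
noncomputable def branchWeight [Fintype V] (T : SimpleGraph V) (x : V) : ℕ :=
  sSup {k | ∃ c : (T.induce {v : V | v ≠ x}).ConnectedComponent, c.supp.ncard = k}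


/-!
Along an edge `uv` of a tree every vertex gets one step closer or one step farther, so
`s(u) - s(v)` is the number of vertices on the `v`-side of `uv` minus the number on the `u`-side;
hence `s(u) ≤ s(v)` iff the `v`-side has at most `n/2` vertices. For a neighbour `z` of `x` the
`z`-side of `xz` is a component of `T - x`, and every component arises this way: this gives
`2 w(x) ≤ n` when `x` is a median vertex. Conversely, follow the path from `x` to any `y`: at each
step `z → y` away from `x`, the `y`-side of `zy` lies inside one component of `T - x`, so it has at
most `w(x) ≤ n/2` vertices and the status does not decrease.
-/

namespace SimpleGraph

variable {T : SimpleGraph V}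

lemma IsTree.length_eq_dist_of_isPath (hT : T.IsTree) {a b : V} {p : T.Walk a b}
    (hp : p.IsPath) : p.length = T.dist a b := by
  obtain ⟨q, hq, hlen⟩ := hT.connected.exists_path_of_dist a b
  have : p = q := congrArg Subtype.val
    ((hT.isAcyclic.subsingleton_path a b).elim (⟨p, hp⟩ : T.Path a b) ⟨q, hq⟩)
  rw [this, hlen]

lemma IsTree.dist_add_dist_of_mem_support (hT : T.IsTree) {a b x : V} {p : T.Walk a b}
    (hp : p.IsPath) (hx : x ∈ p.support) : T.dist a x + T.dist x b = T.dist a b := by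
  classical
  rw [← hT.length_eq_dist_of_isPath (hp.takeUntil hx),
    ← hT.length_eq_dist_of_isPath (hp.dropUntil hx), ← hT.length_eq_dist_of_isPath hp,
    ← Walk.length_append, Walk.take_spec]

lemma IsTree.dist_eq_dist_add_one_or (hT : T.IsTree) {u v : V} (h : T.Adj u v) (w : V) :
    T.dist u w = T.dist v w + 1 ∨ T.dist v w = T.dist u w + 1 := by
  simpa only [dist_comm (v := w)] using hT.dist_eq_dist_add_one_of_adj w h

lemma Reachable.exists_isPath_support_subset_of_induce {s : Set V} {a b : s}
    (h : (T.induce s).Reachable a b) :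
    ∃ p : T.Walk a b, p.IsPath ∧ ∀ v ∈ p.support, v ∈ s := by
  classical
  obtain ⟨q⟩ := h
  let p := q.map (Embedding.induce s).toHom
  refine ⟨p.bypass, p.bypass_isPath, fun v hv => ?_⟩
  obtain ⟨u, -, rfl⟩ := List.mem_map.mp (Walk.support_map _ q ▸ p.support_bypass_subset_support hv)
  exact u.2

lemma Connected.exists_adj_reachable_induce_ne {G : SimpleGraph V} (hG : G.Connected)
    {x w : V} (hw : w ≠ x) :
    ∃ z, ∃ hxz : G.Adj x z, (G.induce {v | v ≠ x}).Reachable ⟨z, hxz.ne'⟩ ⟨w, hw⟩ := by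
  obtain ⟨p, hp, -⟩ := hG.exists_path_of_dist x w
  cases p with
  | nil => exact absurd rfl hw
  | cons hxz q =>
    rw [Walk.cons_isPath_iff] at hp
    exact ⟨_, hxz, ⟨q.induce _ fun v hv (hvx : v = x) => hp.2 (hvx ▸ hv)⟩⟩

lemma IsTree.dist_eq_dist_add_one_of_reachable_induce (hT : T.IsTree) {x z w : V}
    (hxz : T.Adj x z) (hw : w ≠ x)
    (h : (T.induce {v | v ≠ x}).Reachable ⟨z, hxz.ne'⟩ ⟨w, hw⟩) :
    T.dist x w = T.dist z w + 1 := by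
  obtain ⟨p, hp, hpx⟩ := h.exists_isPath_support_subset_of_induce
  have hcons : (Walk.cons hxz p).IsPath := hp.cons fun hx => hpx x hx rfl
  rw [← hT.length_eq_dist_of_isPath hcons, ← hT.length_eq_dist_of_isPath hp, Walk.length_cons]

/-- Through `x`, the vertex `w` would be at least as close to `z` as to `y`. -/
lemma IsTree.not_mem_support_of_dist_eq_dist_add_one (hT : T.IsTree) {x y z w : V}
    (hd : T.dist y x = T.dist z x + 1) (hw : T.dist z w = T.dist y w + 1) {p : T.Walk y w}
    (hp : p.IsPath) : x ∉ p.support := by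
  intro hx
  have hyw := hT.dist_add_dist_of_mem_support hp hx
  have hzw : T.dist z w ≤ T.dist z x + T.dist x w := hT.connected.dist_triangle
  omega

variable [Fintype V]

noncomputable def side (T : SimpleGraph V) (u v : V) : Finset V :=
  Finset.univ.filter fun w => T.dist u w = T.dist v w + 1

lemma mem_side {u v w : V} : w ∈ side T u v ↔ T.dist u w = T.dist v w + 1 := by
  simp [side]

lemma IsTree.card_side_add_card_side (hT : T.IsTree) {u v : V} (h : T.Adj u v) :
    (side T u v).card + (side T v u).card = Fintype.card V := by
  have hcompl : side T v u = Finset.univ.filter fun w => ¬ T.dist u w = T.dist v w + 1 :=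
    Finset.filter_congr fun w _ => by have := hT.dist_eq_dist_add_one_or h w; omega
  rw [hcompl, side, Finset.card_filter_add_card_filter_not, Finset.card_univ]

lemma IsTree.status_add_card_side (hT : T.IsTree) {u v : V} (h : T.Adj u v) :
    status T u + (side T v u).card = status T v + (side T u v).card := by
  simp only [status, side, Finset.card_filter, ← Finset.sum_add_distrib]
  refine Finset.sum_congr rfl fun w _ => ?_
  have := hT.dist_eq_dist_add_one_or h w
  split_ifs <;> omega

lemma IsTree.status_le_status_iff (hT : T.IsTree) {u v : V} (h : T.Adj u v) :
    status T u ≤ status T v ↔ 2 * (side T u v).card ≤ Fintype.card V := by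
  have := hT.status_add_card_side h
  have := hT.card_side_add_card_side h
  omega

lemma ncard_supp_le_branchWeight {x : V} (c : (T.induce {v | v ≠ x}).ConnectedComponent) :
    c.supp.ncard ≤ branchWeight T x :=
  le_csSup (Set.finite_range _).bddAbove ⟨c, rfl⟩

lemma IsTree.exists_adj_ncard_supp_le_card_side (hT : T.IsTree) {x : V}
    (c : (T.induce {v | v ≠ x}).ConnectedComponent) :
    ∃ z, T.Adj x z ∧ c.supp.ncard ≤ (side T x z).card := by
  obtain ⟨⟨w, hw⟩, rfl⟩ := c.exists_rep
  obtain ⟨z, hxz, hzw⟩ := hT.connected.exists_adj_reachable_induce_ne hw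
  refine ⟨z, hxz, ?_⟩
  rw [← Set.ncard_coe_finset]
  refine Set.ncard_le_ncard_of_injOn Subtype.val (fun u hu => ?_) Subtype.val_injective.injOn
  have hzu := hzw.trans (ConnectedComponent.exact hu).symm
  exact mem_side.mpr (hT.dist_eq_dist_add_one_of_reachable_induce hxz u.2 hzu)

lemma IsTree.card_side_le_branchWeight (hT : T.IsTree) {x y z : V}
    (hd : T.dist y x = T.dist z x + 1) : (side T z y).card ≤ branchWeight T x := by
  have hyx : y ≠ x := by rintro rfl; simp at hd
  let c := (T.induce {v | v ≠ x}).connectedComponentMk ⟨y, hyx⟩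
  have hsub : (side T z y : Set V) ⊆ Subtype.val '' c.supp := by
    intro w hw
    obtain ⟨p, hp, -⟩ := hT.connected.exists_path_of_dist y w
    have hpx := hT.not_mem_support_of_dist_eq_dist_add_one hd (mem_side.mp hw) hp
    have hr : (T.induce {v | v ≠ x}).Reachable ⟨y, hyx⟩ ⟨w, _⟩ :=
      ⟨p.induce _ fun v hv (hvx : v = x) => hpx (hvx ▸ hv)⟩
    exact ⟨_, ConnectedComponent.sound hr.symm, rfl⟩
  calc (side T z y).card = (side T z y : Set V).ncard := (Set.ncard_coe_finset _).symm
    _ ≤ (Subtype.val '' c.supp).ncard := Set.ncard_le_ncard hsub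
    _ = c.supp.ncard := Set.ncard_image_of_injective _ Subtype.val_injective
    _ ≤ branchWeight T x := ncard_supp_le_branchWeight c

lemma IsTree.two_mul_branchWeight_le_of_forall_adj_status_le (hT : T.IsTree) {x : V}
    (h : ∀ z, T.Adj x z → status T x ≤ status T z) : 2 * branchWeight T x ≤ Fintype.card V := by
  suffices branchWeight T x ≤ Fintype.card V / 2 by omega
  refine csSup_le' ?_
  rintro _ ⟨c, rfl⟩
  obtain ⟨z, hxz, hc⟩ := hT.exists_adj_ncard_supp_le_card_side c
  have := (hT.status_le_status_iff hxz).mp (h z hxz)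
  omega

lemma IsTree.status_le_of_two_mul_branchWeight_le (hT : T.IsTree) {x : V}
    (hbw : 2 * branchWeight T x ≤ Fintype.card V) (y : V) : status T x ≤ status T y := by
  obtain ⟨p, hp, -⟩ := hT.connected.exists_path_of_dist y x
  induction p with
  | nil => exact le_rfl
  | @cons y z x hyz q ih =>
    have hq : q.IsPath := hp.of_cons
    have hd : T.dist y x = T.dist z x + 1 := by
      rw [← hT.length_eq_dist_of_isPath hq, ← hT.length_eq_dist_of_isPath hp, Walk.length_cons]
    have := hT.card_side_le_branchWeight hd
    exact (ih hbw hq).trans ((hT.status_le_status_iff hyz.symm).mpr (by omega))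

end SimpleGraph

/-- A vertex of a tree is in the median iff its branch-weight is at most `n/2`. -/
theorem stmt0 [Fintype V] (T : SimpleGraph V) (hT : T.IsTree) (x : V) :
    (∀ y : V, status T x ≤ status T y) ↔
      2 * branchWeight T x ≤ Fintype.card V :=
  ⟨fun h => hT.two_mul_branchWeight_le_of_forall_adj_status_le fun z _ => h z,
    hT.status_le_of_two_mul_branchWeight_le⟩
end

section
/- Let G be a connected graph and uv a non-pendant cut edge of G (i.e., a cut edge neither of whose endpoints has degree one). Let G_{uv} be the graph obtained from G by contracting the edge uv to a single vertex u and attaching a new pendant vertex v to u. Then the minimum status of G is strictly greater than the minimum status of G_{uv}. -/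
open SimpleGraph

variable {V : Type*}

/-!
Let `H = G_{uv}` and let `φ` send `v` to `u` and fix every other vertex. A `G`-walk projects
under `φ` to an `H`-walk that is no longer, so `d_H(φ a, φ b) ≤ d_G(a, b)`. Take `a` of minimum
status in `G`; since `uv` is a bridge, `a` lies on the side of `u` or of `v` in `G - uv`.

On `u`'s side, `d_H(a, v) ≤ d_G(a, u) + 1 = d_G(a, v)`, and a neighbour `x ≠ u` of `v` becomes
adjacent to `u`, so `d_H(a, x) ≤ d_G(a, u) + 1 < d_G(a, x)`.

On `v`'s side, compare `d_H(φ a, ·)` with `d_G(a, ·)` after swapping `u` and `v`: the pendant `v`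
is at distance at most `d_G(a, v) + 1 = d_G(a, u)`, and a neighbour `y ≠ v` of `u` satisfies
`d_H(φ a, y) ≤ d_G(a, v) + 1 < d_G(a, y)`.
-/

namespace SimpleGraph

variable {W : Type*} {G : SimpleGraph V} {H : SimpleGraph W}

theorem Walk.exists_walk_length_le_of_adj_or_eq {φ : V → W}
    (hφ : ∀ ⦃x y⦄, G.Adj x y → H.Adj (φ x) (φ y) ∨ φ x = φ y) {a b : V} (p : G.Walk a b) :
    ∃ q : H.Walk (φ a) (φ b), q.length ≤ p.length := by
  induction p with
  | nil => exact ⟨.nil, le_rfl⟩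
  | cons h _ ih =>
    obtain ⟨q, hq⟩ := ih
    rcases hφ h with hadj | heq
    · exact ⟨.cons hadj q, by simpa using hq⟩
    · exact ⟨q.copy heq.symm rfl, by simpa using hq.trans (Nat.le_succ _)⟩

theorem Reachable.dist_map_le_of_adj_or_eq {φ : V → W}
    (hφ : ∀ ⦃x y⦄, G.Adj x y → H.Adj (φ x) (φ y) ∨ φ x = φ y) {a b : V}
    (hab : G.Reachable a b) : H.dist (φ a) (φ b) ≤ G.dist a b := by
  obtain ⟨p, hp⟩ := hab.exists_walk_length_eq_dist
  obtain ⟨q, hq⟩ := p.exists_walk_length_le_of_adj_or_eq hφ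
  exact (dist_le q).trans (hp ▸ hq)

theorem Adj.dist_le_dist_add_one {v w : V} (h : G.Adj v w) (u : V) :
    G.dist u w ≤ G.dist u v + 1 := by
  rcases h.diff_dist_adj (u := u) with h | h | h <;> omega

/-- A walk leaving the component of `u` in `G - uv` has to cross `uv` from `u` to `v`. -/
theorem Walk.dist_add_one_add_dist_le_length {u v a b : V}
    (ha : (G.deleteEdges {s(u, v)}).Reachable u a)
    (hb : ¬ (G.deleteEdges {s(u, v)}).Reachable u b) (p : G.Walk a b) :
    G.dist u a + 1 + G.dist v b ≤ p.length := by
  induction p with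
  | nil => exact absurd ha hb
  | @cons x c b h p ih =>
    by_cases hxc : s(x, c) = s(u, v)
    · rcases Sym2.eq_iff.mp hxc with ⟨rfl, rfl⟩ | ⟨rfl, rfl⟩
      · simpa [add_comm] using dist_le p
      · have hvu := h.symm.dist_le_dist_add_one c
        have := ih (Reachable.refl _) hb
        simp only [dist_self, Walk.length_cons] at *
        omega
    · have hc : (G.deleteEdges {s(u, v)}).Adj x c := by simp [h, hxc]
      have := ih (ha.trans hc.reachable) hb
      have := h.symm.dist_le_dist_add_one u
      simp only [Walk.length_cons]
      omega

theorem dist_add_one_add_dist_le_dist {u v a b : V}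
    (ha : (G.deleteEdges {s(u, v)}).Reachable u a)
    (hb : ¬ (G.deleteEdges {s(u, v)}).Reachable u b) (hab : G.Reachable a b) :
    G.dist u a + 1 + G.dist v b ≤ G.dist a b := by
  obtain ⟨p, hp⟩ := hab.exists_walk_length_eq_dist
  exact hp ▸ p.dist_add_one_add_dist_le_length ha hb

end SimpleGraph

theorem status_lt_status_of_dist_le_comp_equiv {W : Type*} [Fintype V] [Fintype W]
    {G : SimpleGraph V} {H : SimpleGraph W} {a : V} {c : W} (σ : W ≃ V)
    (hle : ∀ b, H.dist c b ≤ G.dist a (σ b)) (hlt : ∃ b, H.dist c b < G.dist a (σ b)) :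
    status H c < status G a := by
  obtain ⟨b, hb⟩ := hlt
  rw [status, status, ← σ.sum_comp]
  exact Finset.sum_lt_sum (fun b _ => hle b) ⟨b, Finset.mem_univ _, hb⟩

namespace SimpleGraph

variable {G : SimpleGraph V} {u v : V}

/-- `G_{uv}`: the edge `uv` is contracted to `u`, and `v` is reattached to `u` as a pendant
vertex. -/
def pendantContraction (G : SimpleGraph V) (u v : V) : SimpleGraph V :=
  fromRel fun a b =>
    (a = v ∧ b = u) ∨
    (a ≠ v ∧ b ≠ v ∧ (G.Adj a b ∨ (a = u ∧ G.Adj v b) ∨ (b = u ∧ G.Adj a v)))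

theorem pendantContraction_adj_pendant (huv : u ≠ v) : (G.pendantContraction u v).Adj u v := by
  simp [pendantContraction, huv]

theorem pendantContraction_adj_of_adj (huv : u ≠ v) {x : V} (hx : G.Adj u x ∨ G.Adj v x)
    (hxu : x ≠ u) (hxv : x ≠ v) : (G.pendantContraction u v).Adj u x := by
  simp [pendantContraction, huv, hxu.symm, hxv]
  tauto

theorem pendantContraction_adj_or_eq_of_adj [DecidableEq V] (huv : u ≠ v) {x y : V}
    (hxy : G.Adj x y) :
    (G.pendantContraction u v).Adj (Function.update id v u x) (Function.update id v u y) ∨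
      Function.update id v u x = Function.update id v u y := by
  simp only [pendantContraction, fromRel_adj, Function.update_apply, id]
  split_ifs <;> grind [Adj.ne, Adj.symm]

theorem pendantContraction_dist_le_of_ne [DecidableEq V] (hG : G.Connected) (huv : u ≠ v)
    (a : V) {b : V} (hb : b ≠ v) :
    (G.pendantContraction u v).dist (Function.update id v u a) b ≤ G.dist a b := by
  simpa [hb] using (hG.preconnected a b).dist_map_le_of_adj_or_eq
    fun _ _ => pendantContraction_adj_or_eq_of_adj huv

theorem status_pendantContraction_lt_of_reachable [Fintype V] (hG : G.Connected)
    (hbridge : G.IsBridge s(u, v)) {x : V} (hvx : G.Adj v x) (hxu : x ≠ u) {a : V}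
    (ha : (G.deleteEdges {s(u, v)}).Reachable u a) :
    status (G.pendantContraction u v) a < status G a := by
  classical
  have huv : u ≠ v := by rintro rfl; exact hbridge (Reachable.refl _)
  have hav : a ≠ v := by rintro rfl; exact hbridge ha
  have hx : ¬ (G.deleteEdges {s(u, v)}).Reachable u x := fun hx =>
    hbridge (hx.trans (Adj.reachable (by simp [hvx.symm, hxu, huv.symm])))
  have hdist (b : V) (hb : b ≠ v) : (G.pendantContraction u v).dist a b ≤ G.dist a b := by
    simpa [hav] using pendantContraction_dist_le_of_ne hG huv a hb
  have hav' : G.dist a u + 1 ≤ G.dist a v := by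
    simpa [dist_comm (u := u)] using dist_add_one_add_dist_le_dist ha hbridge (hG.preconnected a v)
  have hax : G.dist a u + 2 ≤ G.dist a x := by
    have := dist_add_one_add_dist_le_dist ha hx (hG.preconnected a x)
    rwa [dist_eq_one_iff_adj.mpr hvx, dist_comm (u := u)] at this
  have hHu := hdist u huv
  have hHv := (pendantContraction_adj_pendant (G := G) huv).dist_le_dist_add_one a
  have hHx := (pendantContraction_adj_of_adj huv (.inr hvx) hxu hvx.ne').dist_le_dist_add_one a
  refine status_lt_status_of_dist_le_comp_equiv (Equiv.refl V) (fun b => ?_) ⟨x, ?_⟩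
  · by_cases hb : b = v
    · rw [hb, Equiv.refl_apply]; omega
    · exact hdist b hb
  · rw [Equiv.refl_apply]; omega

theorem status_pendantContraction_lt_of_not_reachable [Fintype V] [DecidableEq V]
    (hG : G.Connected) (huv : u ≠ v) {y : V} (huy : G.Adj u y) (hyv : y ≠ v) {a : V}
    (ha : ¬ (G.deleteEdges {s(u, v)}).Reachable u a) :
    status (G.pendantContraction u v) (Function.update id v u a) < status G a := by
  set c := Function.update id v u a
  have hHu : (G.pendantContraction u v).dist c u ≤ G.dist a v := by
    simpa using (hG.preconnected a v).dist_map_le_of_adj_or_eq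
      fun _ _ => pendantContraction_adj_or_eq_of_adj huv
  have hau : G.dist a v + 1 ≤ G.dist a u := by
    have := dist_add_one_add_dist_le_dist (Reachable.refl u) ha (hG.preconnected u a)
    rwa [dist_self, zero_add, add_comm, dist_comm (u := v), dist_comm (u := u)] at this
  have hay : G.dist a v + 2 ≤ G.dist a y := by
    have := dist_add_one_add_dist_le_dist (Adj.reachable (by simp [huy, hyv, huv])) ha
      (hG.preconnected y a)
    rwa [dist_eq_one_iff_adj.mpr huy, add_comm, dist_comm (u := v), dist_comm (u := y)] at this
  have hHv := (pendantContraction_adj_pendant (G := G) huv).dist_le_dist_add_one c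
  have hHy := (pendantContraction_adj_of_adj huv (.inl huy) huy.ne' hyv).dist_le_dist_add_one c
  refine status_lt_status_of_dist_le_comp_equiv (Equiv.swap u v) (fun b => ?_) ⟨y, ?_⟩
  · by_cases hbu : b = u
    · rwa [hbu, Equiv.swap_apply_left]
    by_cases hbv : b = v
    · rw [hbv, Equiv.swap_apply_right]; omega
    · rw [Equiv.swap_apply_of_ne_of_ne hbu hbv]
      exact pendantContraction_dist_le_of_ne hG huv a hbv
  · rw [Equiv.swap_apply_of_ne_of_ne huy.ne' hyv]; omega

end SimpleGraph

/-- Contracting a non-pendant cut edge `uv` and attaching the pendant vertex `v`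
back at `u` strictly decreases the minimum status. -/
theorem stmt1 [Fintype V] (G : SimpleGraph V) (hG : G.Connected) (u v : V)
    (huv : G.Adj u v) (hbridge : G.IsBridge s(u, v))
    (hu : 2 ≤ (G.neighborSet u).ncard) (hv : 2 ≤ (G.neighborSet v).ncard) :
    minStatus (SimpleGraph.fromRel (fun a b =>
      (a = v ∧ b = u) ∨
      (a ≠ v ∧ b ≠ v ∧ (G.Adj a b ∨ (a = u ∧ G.Adj v b) ∨ (b = u ∧ G.Adj a v)))))
      < minStatus G := by
  classical
  change minStatus (G.pendantContraction u v) < minStatus G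
  have : Nonempty V := hG.nonempty
  obtain ⟨a, ha⟩ : minStatus G ∈ Set.range (status G) := Nat.sInf_mem (Set.range_nonempty _)
  obtain ⟨c, hc⟩ : ∃ c, status (G.pendantContraction u v) c < status G a := by
    by_cases hside : (G.deleteEdges {s(u, v)}).Reachable u a
    · obtain ⟨x, hvx, hxu⟩ := Set.exists_ne_of_one_lt_ncard hv u
      exact ⟨a, status_pendantContraction_lt_of_reachable hG hbridge hvx hxu hside⟩
    · obtain ⟨y, huy, hyv⟩ := Set.exists_ne_of_one_lt_ncard hu v
      exact ⟨_, status_pendantContraction_lt_of_not_reachable hG huv.ne huy hyv hside⟩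
  exact (Nat.sInf_le (Set.mem_range_self c)).trans_lt (ha ▸ hc)
end

section
/- Let T be a tree of order n with a vertex u having neighbors u_1,...,u_k where k >= 3, and let B_i be the component of T - u containing u_i. Suppose |V(B_1)| >= |V(B_2)|. For a vertex w in B_2 and an integer t with 3 <= t <= k, let T' be the tree obtained from T by deleting the edges u u_i and adding edges w u_i for 3 <= i <= t. Then the minimum status of T' is strictly greater than the minimum status of T. -/
/-!
Let `S` be the union of the moved branches and `W` the branch at `u` containing `w`. Distances in
the new tree `T'` are bounded below by potentials that are 1-Lipschitz along its edges: vertices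
on the same side of `S` are at least as far apart as in `T`, and `x ∉ S`, `y ∈ S` are at distance
at least `d(x, w) + d(u, y)`. Hence every vertex `x` has larger status in `T'` than some vertex has
in `T`. For `x ∈ S` that vertex is `x`: rerouting through `w` instead of `u` costs `d(u, w)` for
each vertex outside `S ∪ W` and saves at most `d(u, w)` for each vertex of `W`. For `x ∈ W` it is
`u`, by the same count with `d(x, u)`. Otherwise it is `x` again, as every distance into `S` grows.
The counts are favourable because `B₁ ∪ {u}` lies outside `S ∪ W` and `|W| = |B₂| ≤ |B₁|`.
-/

open SimpleGraph

variable {V : Type*}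

open Finset

namespace SimpleGraph

variable {G G' : SimpleGraph V} {S : Set V} {a b u v w x y z : V}

lemma Reachable.le_add_dist {g : V → ℕ} (hg : ∀ a b, G.Adj a b → g b ≤ g a + 1)
    (h : G.Reachable x y) : g y ≤ g x + G.dist x y := by
  have hwalk : ∀ {a b} (p : G.Walk a b), g b ≤ g a + p.length := by
    intro a b p
    induction p with
    | nil => simp
    | cons hadj p ih =>
      have := hg _ _ hadj
      rw [Walk.length_cons]
      omega
  obtain ⟨p, hp⟩ := h.exists_walk_length_eq_dist
  exact hp ▸ hwalk p

lemma Adj.dist_le_dist_add_one_s2 (hab : G.Adj a b) (z : V) : G.dist z b ≤ G.dist z a + 1 := by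
  simpa [dist_eq_one_iff_adj.mpr hab] using hab.reachable.dist_triangle_right z

lemma Walk.dist_add_dist_le_length (p : G.Walk x y) (hu : u ∈ p.support) :
    G.dist x u + G.dist u y ≤ p.length := by
  classical
  have hsplit := congrArg Walk.length (p.take_spec hu)
  rw [Walk.length_append] at hsplit
  have := dist_le (p.takeUntil u hu)
  have := dist_le (p.dropUntil u hu)
  omega

lemma Connected.of_forall_adj_reachable (hG : G.Connected)
    (h : ∀ a b, G.Adj a b → G'.Reachable a b) : G'.Connected := by
  refine (connected_iff G').2 ⟨fun x y => ?_, hG.nonempty⟩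
  simp only [reachable_iff_reflTransGen] at h ⊢
  exact Relation.ReflTransGen.lift' id h x y ((reachable_iff_reflTransGen x y).1 (hG x y))

def branchAt (G : SimpleGraph V) (u x : V) : Set V := {y | ∃ p : G.Walk x y, u ∉ p.support}

lemma mem_branchAt_self (h : x ≠ u) : x ∈ G.branchAt u x :=
  ⟨.nil, by simpa using h.symm⟩

lemma notMem_branchAt : u ∉ G.branchAt u x :=
  fun ⟨p, hp⟩ => hp p.end_mem_support

lemma mem_branchAt_of_walk (hy : y ∈ G.branchAt u x) (q : G.Walk y z) (hq : u ∉ q.support) :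
    z ∈ G.branchAt u x := by
  obtain ⟨p, hp⟩ := hy
  exact ⟨p.append q, by simp [Walk.mem_support_append_iff, hp, hq]⟩

lemma Adj.mem_branchAt (hyz : G.Adj y z) (hy : y ∈ G.branchAt u x) (hz : z ≠ u) :
    z ∈ G.branchAt u x :=
  mem_branchAt_of_walk hy (.cons hyz .nil) <| by
    simp [(ne_of_mem_of_not_mem hy notMem_branchAt).symm, hz.symm]

lemma Connected.dist_eq_dist_add_dist_of_mem_branchAt (hG : G.Connected)
    (hx : x ∈ G.branchAt u v) (hy : y ∉ G.branchAt u v) :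
    G.dist x y = G.dist x u + G.dist u y := by
  refine le_antisymm hG.dist_triangle ?_
  obtain ⟨p, hp⟩ := hG.exists_walk_length_eq_dist x y
  have hu : u ∈ p.support := by
    by_contra hu
    exact hy (mem_branchAt_of_walk hx p hu)
  exact hp ▸ p.dist_add_dist_le_length hu

lemma IsTree.eq_of_mem_branchAt (hG : G.IsTree) (ha : G.Adj u a) (hb : G.Adj u b)
    (hva : v ∈ G.branchAt u a) (hvb : v ∈ G.branchAt u b) : a = b := by
  classical
  obtain ⟨p, hp⟩ := hva
  obtain ⟨q, hq⟩ := hvb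
  have hpath : ∀ {c} (hc : G.Adj u c) (r : G.Walk c v), u ∉ r.support →
      (Walk.cons hc r.bypass).IsPath := fun _ r hr =>
    r.bypass_isPath.cons fun h => hr (r.support_bypass_subset_support h)
  obtain ⟨P, -, hP⟩ := hG.existsUnique_path u v
  have heq := (hP _ (hpath ha p hp)).trans (hP _ (hpath hb q hq)).symm
  simpa using congrArg (fun r : G.Walk u v => r.getVert 1) heq

lemma IsTree.disjoint_branchAt (hG : G.IsTree) (ha : G.Adj u a) (hb : G.Adj u b) (hab : a ≠ b) :
    Disjoint (G.branchAt u a) (G.branchAt u b) :=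
  Set.disjoint_left.2 fun _ hva hvb => hab (hG.eq_of_mem_branchAt ha hb hva hvb)

/-- `G'` is contained in the graph obtained from `G` by moving the edges between `u` and `S`
over to `w`. -/
def IsTransplant (G G' : SimpleGraph V) (S : Set V) (u w : V) : Prop :=
  ∀ a b, G'.Adj a b → (G.Adj a b ∧ (a ∈ S ↔ b ∈ S)) ∨
    (a = w ∧ b ∈ S ∧ G.Adj u b) ∨ (b = w ∧ a ∈ S ∧ G.Adj u a)

namespace IsTransplant

variable (h : IsTransplant G G' S u w) (hG' : G'.Connected) (hwS : w ∉ S)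
include h hG' hwS

open Classical in
lemma le_dist_of_notMem (hx : x ∉ S) (y : V) :
    (if y ∈ S then G.dist x w + G.dist u y else G.dist x y) ≤ G'.dist x y := by
  have hlip := (hG'.preconnected x y).le_add_dist
    (g := fun v => if v ∈ S then G.dist x w + G.dist u v else G.dist x v)
  refine le_of_le_of_eq (hlip fun a b hab => ?_) (by simp [hx])
  rcases h a b hab with ⟨hGab, hiff⟩ | ⟨rfl, hb, hub⟩ | ⟨rfl, ha, hua⟩
  · by_cases ha : a ∈ S
    · simp only [ha, hiff.1 ha, if_true]
      have := hGab.dist_le_dist_add_one_s2 u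
      omega
    · simp only [ha, mt hiff.2 ha, if_false]
      exact hGab.dist_le_dist_add_one_s2 x
  · simp [hb, hwS, dist_eq_one_iff_adj.2 hub]
  · simp [ha, hwS, dist_eq_one_iff_adj.2 hua]
    omega

open Classical in
lemma le_dist_of_mem (hx : x ∈ S) (y : V) :
    (if y ∈ S then G.dist x y else G.dist x u + G.dist w y) ≤ G'.dist x y := by
  have hlip := (hG'.preconnected x y).le_add_dist
    (g := fun v => if v ∈ S then G.dist x v else G.dist x u + G.dist w v)
  refine le_of_le_of_eq (hlip fun a b hab => ?_) (by simp [hx])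
  rcases h a b hab with ⟨hGab, hiff⟩ | ⟨rfl, hb, hub⟩ | ⟨rfl, ha, hua⟩
  · by_cases ha : a ∈ S
    · simp only [ha, hiff.1 ha, if_true]
      exact hGab.dist_le_dist_add_one_s2 x
    · simp only [ha, mt hiff.2 ha, if_false]
      have := hGab.dist_le_dist_add_one_s2 w
      omega
  · simpa [hb, hwS] using hub.dist_le_dist_add_one_s2 x
  · simpa [ha, hwS, add_comm] using hua.symm.dist_le_dist_add_one_s2 x

lemma dist_add_dist_le (hx : x ∉ S) (hy : y ∈ S) : G.dist x w + G.dist u y ≤ G'.dist x y := by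
  classical
  simpa [hy] using h.le_dist_of_notMem hG' hwS hx y

lemma dist_add_dist_le' (hx : x ∈ S) (hy : y ∉ S) : G.dist x u + G.dist w y ≤ G'.dist x y := by
  classical
  simpa [hy] using h.le_dist_of_mem hG' hwS hx y

lemma dist_le_of_notMem (hx : x ∉ S) (hy : y ∉ S) : G.dist x y ≤ G'.dist x y := by
  classical
  simpa [hy] using h.le_dist_of_notMem hG' hwS hx y

lemma dist_le_of_mem (hx : x ∈ S) (hy : y ∈ S) : G.dist x y ≤ G'.dist x y := by
  classical
  simpa [hy] using h.le_dist_of_mem hG' hwS hx y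

end IsTransplant

end SimpleGraph

lemma Finset.sum_lt_sum_of_card_lt_card_sdiff {ι : Type*} [DecidableEq ι] {A W : Finset ι}
    {f g : ι → ℕ} {c : ℕ} (hWA : W ⊆ A) (hc : 0 < c) (hcard : #W < #(A \ W))
    (hW : ∀ y ∈ W, f y ≤ g y + c) (hAW : ∀ y ∈ A \ W, f y + c ≤ g y) :
    ∑ y ∈ A, f y < ∑ y ∈ A, g y := by
  rw [← sum_sdiff hWA, ← sum_sdiff hWA (f := g)]
  have h₁ : ∑ y ∈ W, f y ≤ ∑ y ∈ W, g y + #W * c := by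
    simpa [sum_add_distrib] using sum_le_sum hW
  have h₂ : ∑ y ∈ A \ W, f y + #(A \ W) * c ≤ ∑ y ∈ A \ W, g y := by
    simpa [sum_add_distrib] using sum_le_sum hAW
  have h₃ : #W * c < #(A \ W) * c := Nat.mul_lt_mul_of_pos_right hcard hc
  omega

lemma minStatus_le_status [Fintype V] (G : SimpleGraph V) (x : V) : minStatus G ≤ status G x :=
  Nat.sInf_le ⟨x, rfl⟩

lemma exists_status_eq_minStatus [Fintype V] [Nonempty V] (G : SimpleGraph V) :
    ∃ x, status G x = minStatus G :=
  Nat.sInf_mem (Set.range_nonempty _)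

lemma status_eq_sum_add_sum_compl [Fintype V] [DecidableEq V] (G : SimpleGraph V) (S : Finset V)
    (x : V) : status G x = ∑ y ∈ S, G.dist x y + ∑ y ∈ Sᶜ, G.dist x y :=
  (sum_add_sum_compl S _).symm

namespace SimpleGraph.IsTransplant

variable [Fintype V] [DecidableEq V] {G G' : SimpleGraph V} {S W : Finset V} {u w x : V}
  (h : IsTransplant G G' S u w) (hG : G.Connected) (hG' : G'.Connected)
  (hwW : w ∈ W) (huW : u ∉ W) (hSW : Disjoint S W)
  (hsep : ∀ x ∈ W, ∀ y ∉ W, G.dist x y = G.dist x u + G.dist u y)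
include h hG hG' hwW huW hSW hsep

lemma status_lt_status_of_mem (hcard : #W < #(Sᶜ \ W)) (hx : x ∈ S) :
    status G x < status G' x := by
  have hwS : w ∉ S := Finset.disjoint_right.1 hSW hwW
  have huw : 0 < G.dist u w := hG.pos_dist_of_ne (ne_of_mem_of_not_mem hwW huW).symm
  rw [status_eq_sum_add_sum_compl G S, status_eq_sum_add_sum_compl G' S]
  refine add_lt_add_of_le_of_lt (sum_le_sum fun y hy => h.dist_le_of_mem hG' hwS hx hy) ?_
  calc ∑ y ∈ Sᶜ, G.dist x y < ∑ y ∈ Sᶜ, (G.dist x u + G.dist w y) := by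
        refine sum_lt_sum_of_card_lt_card_sdiff (subset_compl_iff_disjoint_right.2 hSW.symm)
          huw hcard (fun y _ => ?_) (fun y hy => ?_)
        · have := hG.dist_triangle (u := x) (v := u) (w := y)
          have := hG.dist_triangle (u := u) (v := w) (w := y)
          omega
        · have := hG.dist_triangle (u := x) (v := u) (w := y)
          have := hsep w hwW y (mem_sdiff.1 hy).2
          have := dist_comm (G := G) (u := w) (v := u)
          omega
    _ ≤ ∑ y ∈ Sᶜ, G'.dist x y := sum_le_sum fun y hy =>
        h.dist_add_dist_le' hG' hwS hx (mem_compl.1 hy)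

lemma status_center_lt_status (hcard : #W < #(Sᶜ \ W)) (hx : x ∈ W) :
    status G u < status G' x := by
  have hwS : w ∉ S := Finset.disjoint_right.1 hSW hwW
  have hxS : x ∉ S := Finset.disjoint_right.1 hSW hx
  have hxu : 0 < G.dist x u := hG.pos_dist_of_ne (ne_of_mem_of_not_mem hx huW)
  rw [status_eq_sum_add_sum_compl G S, status_eq_sum_add_sum_compl G' S]
  refine add_lt_add_of_le_of_lt (sum_le_sum fun y hy => ?_) ?_
  · exact (Nat.le_add_left _ _).trans (h.dist_add_dist_le hG' hwS hxS hy)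
  calc ∑ y ∈ Sᶜ, G.dist u y < ∑ y ∈ Sᶜ, G.dist x y := by
        refine sum_lt_sum_of_card_lt_card_sdiff (subset_compl_iff_disjoint_right.2 hSW.symm)
          hxu hcard (fun y _ => ?_) (fun y hy => ?_)
        · have := hG.dist_triangle (u := u) (v := x) (w := y)
          have := dist_comm (G := G) (u := x) (v := u)
          omega
        · have := hsep x hx y (mem_sdiff.1 hy).2
          omega
    _ ≤ ∑ y ∈ Sᶜ, G'.dist x y := sum_le_sum fun y hy =>
        h.dist_le_of_notMem hG' hwS hxS (mem_compl.1 hy)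

lemma status_lt_status_of_notMem (hS : S.Nonempty) (hxS : x ∉ S) (hxW : x ∉ W) :
    status G x < status G' x := by
  have hwS : w ∉ S := Finset.disjoint_right.1 hSW hwW
  have huw : 0 < G.dist u w := hG.pos_dist_of_ne (ne_of_mem_of_not_mem hwW huW).symm
  have hxw : G.dist x w = G.dist x u + G.dist u w := by
    rw [dist_comm, hsep w hwW x hxW, dist_comm (u := w), dist_comm (u := u) (v := x), add_comm]
  have hlt : ∀ y ∈ S, G.dist x y < G'.dist x y := fun y hy => by
    have := hG.dist_triangle (u := x) (v := u) (w := y)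
    have := h.dist_add_dist_le hG' hwS hxS hy
    omega
  refine sum_lt_sum (fun y _ => ?_) (hS.imp fun y hy => ⟨mem_univ y, hlt y hy⟩)
  by_cases hy : y ∈ S
  · exact (hlt y hy).le
  · exact h.dist_le_of_notMem hG' hwS hxS hy

lemma minStatus_lt_minStatus (hS : S.Nonempty) (hcard : #W < #(Sᶜ \ W)) :
    minStatus G < minStatus G' := by
  have : Nonempty V := hG.nonempty
  obtain ⟨x, hx⟩ := exists_status_eq_minStatus G'
  rw [← hx]
  by_cases hxS : x ∈ S
  · exact (minStatus_le_status G x).trans_lt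
      (h.status_lt_status_of_mem hG hG' hwW huW hSW hsep hcard hxS)
  by_cases hxW : x ∈ W
  · exact (minStatus_le_status G u).trans_lt
      (h.status_center_lt_status hG hG' hwW huW hSW hsep hcard hxW)
  · exact (minStatus_le_status G x).trans_lt
      (h.status_lt_status_of_notMem hG hG' hwW huW hSW hsep hS hxS hxW)

end SimpleGraph.IsTransplant

lemma Finset.card_lt_card_compl_sdiff {α : Type*} [Fintype α] [DecidableEq α] {S W X : Finset α}
    {u : α} (hXS : Disjoint X S) (hXW : Disjoint X W) (huS : u ∉ S) (huW : u ∉ W) (huX : u ∉ X)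
    (hWX : #W ≤ #X) : #W < #(Sᶜ \ W) :=
  calc #W < #(insert u X) := by rw [card_insert_of_notMem huX]; omega
    _ ≤ #(Sᶜ \ W) := card_le_card <| insert_subset (by simp [huS, huW]) fun x hx => by
        simp [disjoint_left.1 hXS hx, disjoint_left.1 hXW hx]

namespace SimpleGraph

def moveBranches (T : SimpleGraph V) (u w : V) (N : Set V) : SimpleGraph V :=
  fromRel fun a b => (T.Adj a b ∧ ¬((a = u ∧ b ∈ N) ∨ (a ∈ N ∧ b = u))) ∨ (a = w ∧ b ∈ N)

variable {T : SimpleGraph V} {N : Set V} {a b u v w x y : V}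

lemma moveBranches_adj_of_adj (hab : T.Adj a b) (hkept : ¬((a = u ∧ b ∈ N) ∨ (a ∈ N ∧ b = u))) :
    (moveBranches T u w N).Adj a b :=
  (fromRel_adj _ _ _).2 ⟨hab.ne, .inl (.inl ⟨hab, hkept⟩)⟩

lemma moveBranches_adj_of_mem (hwN : w ∉ N) (ha : a ∈ N) : (moveBranches T u w N).Adj w a :=
  (fromRel_adj _ _ _).2 ⟨fun h => hwN (h ▸ ha), .inl (.inr ⟨rfl, ha⟩)⟩

lemma reachable_moveBranches_of_mem_branchAt (hy : y ∈ T.branchAt u x) :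
    (moveBranches T u w N).Reachable x y := by
  obtain ⟨p, hp⟩ := hy
  induction p with
  | nil => rfl
  | cons hab p ih =>
    simp only [Walk.support_cons, List.mem_cons, not_or] at hp
    have hb : _ ≠ u := fun h => hp.2 (h ▸ p.start_mem_support)
    exact (moveBranches_adj_of_adj hab (by tauto)).reachable.trans (ih hp.2)

lemma self_subset_biUnion_branchAt (hN : N ⊆ T.neighborSet u) :
    N ⊆ ⋃ a ∈ N, T.branchAt u a :=
  fun _ ha => Set.mem_biUnion ha (mem_branchAt_self (hN ha).ne')

lemma connected_moveBranches (hT : T.Connected) (hN : N ⊆ T.neighborSet u) (hv : T.Adj u v)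
    (hvN : v ∉ N) (hw : w ∈ T.branchAt u v) (hwN : w ∉ N) : (moveBranches T u w N).Connected := by
  have huN : u ∉ N := fun h => (hN h).ne rfl
  have huw : (moveBranches T u w N).Reachable u w :=
    (moveBranches_adj_of_adj hv (by tauto)).reachable.trans
      (reachable_moveBranches_of_mem_branchAt hw)
  have hmoved : ∀ a ∈ N, (moveBranches T u w N).Reachable u a :=
    fun a ha => huw.trans (moveBranches_adj_of_mem hwN ha).reachable
  refine hT.of_forall_adj_reachable fun a b hab => ?_
  by_cases hkept : (a = u ∧ b ∈ N) ∨ (a ∈ N ∧ b = u)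
  · rcases hkept with ⟨rfl, hb⟩ | ⟨ha, rfl⟩
    · exact hmoved b hb
    · exact (hmoved a ha).symm
  · exact (moveBranches_adj_of_adj hab hkept).reachable

lemma IsTree.mem_biUnion_branchAt_of_adj (hT : T.IsTree) (hN : N ⊆ T.neighborSet u)
    (hab : T.Adj a b) (hkept : ¬(a ∈ N ∧ b = u)) (ha : a ∈ ⋃ c ∈ N, T.branchAt u c) :
    b ∈ ⋃ c ∈ N, T.branchAt u c := by
  obtain ⟨c, hc, hac⟩ := Set.mem_iUnion₂.1 ha
  by_cases hb : b = u
  · subst hb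
    obtain rfl := hT.eq_of_mem_branchAt hab.symm (hN hc) (mem_branchAt_self hab.ne) hac
    exact absurd ⟨hc, rfl⟩ hkept
  · exact Set.mem_biUnion hc (hab.mem_branchAt hac hb)

lemma IsTree.isTransplant_moveBranches (hT : T.IsTree) (hN : N ⊆ T.neighborSet u) :
    IsTransplant T (moveBranches T u w N) (⋃ a ∈ N, T.branchAt u a) u w := by
  intro a b hab
  obtain ⟨-, (⟨hTab, hkept⟩ | ⟨rfl, hb⟩) | (⟨hTab, hkept⟩ | ⟨rfl, ha⟩)⟩ := (fromRel_adj _ _ _).1 hab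
  · exact .inl ⟨hTab, hT.mem_biUnion_branchAt_of_adj hN hTab (by tauto),
      hT.mem_biUnion_branchAt_of_adj hN hTab.symm (by tauto)⟩
  · exact .inr (.inl ⟨rfl, self_subset_biUnion_branchAt hN hb, hN hb⟩)
  · exact .inl ⟨hTab.symm, hT.mem_biUnion_branchAt_of_adj hN hTab.symm (by tauto),
      hT.mem_biUnion_branchAt_of_adj hN hTab (by tauto)⟩
  · exact .inr (.inr ⟨rfl, self_subset_biUnion_branchAt hN ha, hN ha⟩)

lemma IsTree.disjoint_branchAt_biUnion (hT : T.IsTree) (hN : N ⊆ T.neighborSet u)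
    (hv : T.Adj u v) (hvN : v ∉ N) : Disjoint (T.branchAt u v) (⋃ a ∈ N, T.branchAt u a) :=
  Set.disjoint_iUnion₂_right.2 fun _ ha => hT.disjoint_branchAt hv (hN ha) fun h => hvN (h ▸ ha)

theorem IsTree.minStatus_lt_minStatus_moveBranches [Fintype V] {v₀ v₁ : V} (hT : T.IsTree)
    (hN : N ⊆ T.neighborSet u) (hNne : N.Nonempty) (hv₀ : T.Adj u v₀) (hv₁ : T.Adj u v₁)
    (hv₀N : v₀ ∉ N) (hv₁N : v₁ ∉ N) (hv : v₀ ≠ v₁)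
    (hcard : (T.branchAt u v₁).ncard ≤ (T.branchAt u v₀).ncard) (hw : w ∈ T.branchAt u v₁) :
    minStatus T < minStatus (moveBranches T u w N) := by
  classical
  set S := ⋃ a ∈ N, T.branchAt u a
  have hwS : w ∉ S := Set.disjoint_left.1 (hT.disjoint_branchAt_biUnion hN hv₁ hv₁N) hw
  refine IsTransplant.minStatus_lt_minStatus (S := S.toFinset) (W := (T.branchAt u v₁).toFinset)
    ?_ hT.connected (connected_moveBranches hT.connected hN hv₁ hv₁N hw
      fun h => hwS (self_subset_biUnion_branchAt hN h))
    (Set.mem_toFinset.2 hw) (by simpa using notMem_branchAt)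
    (Set.disjoint_toFinset.2 (hT.disjoint_branchAt_biUnion hN hv₁ hv₁N).symm) ?_
    (Set.toFinset_nonempty.2 (hNne.mono (self_subset_biUnion_branchAt hN))) ?_
  · rw [Set.coe_toFinset]
    exact hT.isTransplant_moveBranches hN
  · simp only [Set.mem_toFinset]
    exact fun x hx y hy => hT.connected.dist_eq_dist_add_dist_of_mem_branchAt hx hy
  · refine card_lt_card_compl_sdiff (X := (T.branchAt u v₀).toFinset) (u := u)
      (Set.disjoint_toFinset.2 (hT.disjoint_branchAt_biUnion hN hv₀ hv₀N))
      (Set.disjoint_toFinset.2 (hT.disjoint_branchAt hv₀ hv₁ hv))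
      (by simp [S, notMem_branchAt]) (by simp [notMem_branchAt]) (by simp [notMem_branchAt]) ?_
    simpa only [← Set.ncard_eq_toFinset_card'] using hcard

end SimpleGraph

/-- The neighbours of `u` are `f 0, …, f (k-1)` (so `u_i = f (i-1)`), and `branch i` is the
branch of `T` at `u` containing `f i`. -/
theorem stmt2 [Fintype V] (T : SimpleGraph V) (hT : T.IsTree) (u : V) (k : ℕ)
    (hk : 3 ≤ k) (f : Fin k → V) (hinj : Function.Injective f)
    (hrange : Set.range f = T.neighborSet u)
    (branch : Fin k → Set V)
    (hbranch : ∀ i : Fin k,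
      branch i = {v : V | ∃ p : T.Walk (f i) v, u ∉ p.support})
    (h12 : (branch ⟨1, by omega⟩).ncard ≤ (branch ⟨0, by omega⟩).ncard)
    (w : V) (hw : w ∈ branch ⟨1, by omega⟩)
    (t : ℕ) (ht3 : 3 ≤ t) :
    minStatus T < minStatus (SimpleGraph.fromRel (fun a b =>
      (T.Adj a b ∧ ¬ ∃ i : Fin k, 2 ≤ (i : ℕ) ∧ (i : ℕ) < t ∧
        ((a = u ∧ b = f i) ∨ (a = f i ∧ b = u))) ∨
      (∃ i : Fin k, 2 ≤ (i : ℕ) ∧ (i : ℕ) < t ∧ a = w ∧ b = f i))) := by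
  obtain rfl : branch = fun i => T.branchAt u (f i) := funext hbranch
  set N := f '' {i | 2 ≤ (i : ℕ) ∧ (i : ℕ) < t}
  have hN : ∀ b, b ∈ N ↔ ∃ i : Fin k, 2 ≤ (i : ℕ) ∧ (i : ℕ) < t ∧ b = f i := fun b => by
    simp [N, eq_comm, and_assoc]
  have hadj : ∀ i, T.Adj u (f i) := fun i => hrange.subset ⟨i, rfl⟩
  have hfN : ∀ i : Fin k, (i : ℕ) < 2 → f i ∉ N := fun i hi hiN => by
    obtain ⟨j, hj, -, hji⟩ := (hN _).1 hiN
    have := congrArg Fin.val (hinj hji)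
    omega
  convert hT.minStatus_lt_minStatus_moveBranches (N := N) (Set.image_subset_iff.2 fun i _ => hadj i)
    ⟨f ⟨2, by omega⟩, (hN _).2 ⟨⟨2, _⟩, le_rfl, ht3, rfl⟩⟩
    (hadj _) (hadj _) (hfN _ two_pos) (hfN _ one_lt_two) (hinj.ne (by simp)) h12 hw using 2
  unfold moveBranches
  congr
  ext a b
  simp only [hN]
  grind
end

section
/- Let T be a tree of order n with matching number m, where 1 <= m <= floor(n/2). Then s(T) >= n + m - 2, with equality if and only if T is isomorphic to A_{n,m}, the tree obtained from the star S_{n-m+1} by attaching a pendant edge to each of m-1 non-central vertices of the star. -/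
/-!
Every vertex other than `u` contributes at least `1` to the status of `u`, and every vertex at
distance at least `2` contributes at least `2`; so `status u ≥ (n - 1) + k`, where `k` counts the
vertices at distance at least `2` from `u`. In a tree the distances from `u` of two adjacent
vertices differ by exactly one, so `u` together with those `k` vertices is a vertex cover, and a
matching has at most `k + 1` edges. Hence `status u ≥ n + m - 2`.

In the case of equality every vertex lies within distance `2` of `u` and `k = m - 1`. Each vertex
at distance `2` is then a leaf whose unique neighbour is adjacent to `u`, and since `u` together
with these neighbours is again a vertex cover, the `m - 1` leaves have distinct neighbours: the
tree is the spider `A_{n,m}` centred at `u`. Conversely the centre of `A_{n,m}` has status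
`(n - m) + 2 (m - 1) = n + m - 2`.
-/


open SimpleGraph

variable {V : Type*}

def spiderRel {α β : Type*} : Option (α ⊕ β) ⊕ β → Option (α ⊕ β) ⊕ β → Prop
  | .inl none, .inl (some _) => True
  | .inl (some (.inr b)), .inr b' => b = b'
  | _, _ => False

/-- The spider with legs `α` of length one and legs `β` of length two: the centre is `inl none`,
its neighbours are the vertices `inl (some z)`, and `inr b` hangs off `inl (some (inr b))`. -/
def spider (α β : Type*) : SimpleGraph (Option (α ⊕ β) ⊕ β) := SimpleGraph.fromRel spiderRel

def spiderCongr {α β α' β' : Type*} (e : α ≃ α') (f : β ≃ β') : spider α β ≃g spider α' β' where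
  toEquiv := (Equiv.optionCongr (e.sumCongr f)).sumCongr f
  map_rel_iff' := by
    rintro ((_ | a | b) | b) ((_ | a' | b') | b') <;> simp [spider, spiderRel]

lemma status_spider_le (α β : Type*) [Fintype α] [Fintype β] :
    status (spider α β) (.inl none) ≤ Fintype.card α + 3 * Fintype.card β := by
  have hadj : ∀ z, (spider α β).Adj (.inl none) (.inl (some z)) := by simp [spider, spiderRel]
  have hleg : ∀ b, (spider α β).Adj (.inl (some (.inr b))) (.inr b) := by simp [spider, spiderRel]
  rw [status, Fintype.sum_sum_type, Fintype.sum_option, dist_self, zero_add]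
  calc _ ≤ ∑ _ : α ⊕ β, 1 + ∑ _ : β, 2 :=
        add_le_add (Finset.sum_le_sum fun z _ => (dist_eq_one_iff_adj.mpr (hadj z)).le)
          (Finset.sum_le_sum fun b _ => dist_le (.cons (hadj (.inr b)) (hleg b).toWalk))
    _ = Fintype.card α + 3 * Fintype.card β := by simp; ring

lemma nonempty_spider_iso_treeA {n m : ℕ} (hm1 : 1 ≤ m) (hm2 : 2 * m ≤ n) :
    Nonempty (spider (Fin (n - 2 * m + 1)) (Fin (m - 1)) ≃g treeA n m) := by
  let f : Option (Fin (n - 2 * m + 1) ⊕ Fin (m - 1)) ⊕ Fin (m - 1) → Fin n :=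
    Sum.elim (Option.elim · ⟨0, by omega⟩
      (Sum.elim (fun i => ⟨m + i, by omega⟩) (fun j => ⟨1 + j, by omega⟩)))
      (fun j => ⟨n - m + 1 + j, by omega⟩)
  have hf : Function.Injective f := by
    rintro ((_ | i | j) | j) ((_ | i' | j') | j') h <;>
      simp only [f, Sum.elim_inl, Sum.elim_inr, Option.elim, Fin.ext_iff, Sum.inl.injEq,
        Sum.inr.injEq, reduceCtorEq, Option.some.injEq] at h ⊢ <;>
      omega
  have hcard : Fintype.card (Option (Fin (n - 2 * m + 1) ⊕ Fin (m - 1)) ⊕ Fin (m - 1)) = n := by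
    simp only [Fintype.card_sum, Fintype.card_option, Fintype.card_fin]
    omega
  refine ⟨⟨Equiv.ofBijective f ((Fintype.bijective_iff_injective_and_card f).mpr
    ⟨hf, by rw [hcard, Fintype.card_fin]⟩), ?_⟩⟩
  rintro ((_ | ⟨i, hi⟩ | ⟨j, hj⟩) | ⟨j, hj⟩) ((_ | ⟨i', hi'⟩ | ⟨j', hj'⟩) | ⟨j', hj'⟩) <;>
    simp only [Equiv.ofBijective_apply, f, Sum.elim_inl, Sum.elim_inr, Option.elim, treeA, spider,
      fromRel_adj, spiderRel, ne_eq, Fin.ext_iff, Sum.inl.injEq, Sum.inr.injEq, reduceCtorEq,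
      Option.some.injEq] <;>
    simp <;>
    omega

lemma exists_isMatching_ncard_eq_matchingNumber [Finite V] (G : SimpleGraph V) :
    ∃ M : G.Subgraph, M.IsMatching ∧ M.edgeSet.ncard = matchingNumber G :=
  Nat.sSup_mem (s := {k | ∃ M : G.Subgraph, M.IsMatching ∧ M.edgeSet.ncard = k})
    ⟨0, ⊥, by simp [Subgraph.IsMatching], by simp⟩
    ⟨Nat.card (Sym2 V), by rintro _ ⟨M, -, rfl⟩; exact Set.ncard_le_card _⟩

namespace SimpleGraph

variable {W : Type*} {G : SimpleGraph V} {H : SimpleGraph W}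

lemma Hom.dist_le (f : G →g H) {u v : V} (h : G.Reachable u v) :
    H.dist (f u) (f v) ≤ G.dist u v := by
  obtain ⟨p, hp⟩ := h.exists_walk_length_eq_dist
  exact (SimpleGraph.dist_le (p.map f)).trans_eq (by rw [Walk.length_map, hp])

lemma Iso.dist_eq (f : G ≃g H) (u v : V) : H.dist (f u) (f v) = G.dist u v := by
  by_cases h : G.Reachable u v
  · refine le_antisymm (f.toHom.dist_le h) ?_
    simpa using f.symm.toHom.dist_le (h.map f.toHom)
  · rw [dist_eq_zero_of_not_reachable h,
      dist_eq_zero_of_not_reachable (mt Iso.reachable_iff.mp h)]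

lemma Iso.status_eq [Fintype V] [Fintype W] (f : G ≃g H) (u : V) :
    status H (f u) = status G u := by
  rw [status, status, ← f.toEquiv.sum_comp]
  exact Finset.sum_congr rfl fun v _ => f.dist_eq u v

lemma Subgraph.IsMatching.eq_of_mem_edgeSet {M : G.Subgraph} (hM : M.IsMatching)
    {e₁ e₂ : Sym2 V} (he₁ : e₁ ∈ M.edgeSet) (he₂ : e₂ ∈ M.edgeSet) {v : V} (hv₁ : v ∈ e₁)
    (hv₂ : v ∈ e₂) : e₁ = e₂ := by
  obtain ⟨w₁, rfl⟩ := Sym2.mem_iff_exists.mp hv₁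
  obtain ⟨w₂, rfl⟩ := Sym2.mem_iff_exists.mp hv₂
  rw [hM.eq_of_adj_left (Subgraph.mem_edgeSet.mp he₁) (Subgraph.mem_edgeSet.mp he₂)]

lemma Subgraph.IsMatching.ncard_edgeSet_le_card {M : G.Subgraph} (hM : M.IsMatching)
    {c : Finset V} (hc : G.IsVertexCover c) : M.edgeSet.ncard ≤ c.card := by
  have hcover : ∀ e : Sym2 V, ∃ v ∈ e, e ∈ M.edgeSet → v ∈ c := by
    intro e
    induction e using Sym2.ind with
    | h a b =>
      by_cases he : s(a, b) ∈ M.edgeSet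
      · rcases hc (M.adj_sub he) with h | h
        exacts [⟨a, Sym2.mem_mk_left a b, fun _ => h⟩, ⟨b, Sym2.mem_mk_right a b, fun _ => h⟩]
      · exact ⟨a, Sym2.mem_mk_left a b, fun h => absurd h he⟩
  choose f hfe hfc using hcover
  rw [← Set.ncard_coe_finset]
  refine Set.ncard_le_ncard_of_injOn f (fun e he => hfc e he) (fun e₁ he₁ e₂ he₂ h => ?_)
    c.finite_toSet
  exact hM.eq_of_mem_edgeSet he₁ he₂ (hfe e₁) (h ▸ hfe e₂)

lemma IsAcyclic.subsingleton_commonNeighbors (hG : G.IsAcyclic) {u v : V} (huv : u ≠ v) :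
    (G.commonNeighbors u v).Subsingleton := by
  intro w hw w' hw'
  rw [mem_commonNeighbors] at hw hw'
  let path : ∀ x, G.Adj u x → G.Adj v x → G.Path u v := fun x hux hvx =>
    ⟨.cons hux hvx.symm.toWalk, by simp [hux.ne, hvx.ne', huv]⟩
  exact congrArg (fun p : G.Path u v => p.1.snd)
    ((hG.subsingleton_path u v).elim (path w hw.1 hw.2) (path w' hw'.1 hw'.2))

lemma IsTree.exists_adj_and_adj_iff_of_two_le_dist (hT : G.IsTree) {u d : V}
    (hdist : ∀ v, G.dist u v ≤ 2) (hd : 2 ≤ G.dist u d) :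
    ∃ w, G.Adj u w ∧ ∀ w', G.Adj w' d ↔ w' = w := by
  replace hd : G.dist u d = 2 := le_antisymm (hdist d) hd
  have hd' : G.edist u d = 2 := by
    rw [← (hT.connected u d).coe_dist_eq_edist, hd]
    rfl
  obtain ⟨hud, -, w, hw⟩ := edist_eq_two_iff.mp hd'
  rw [mem_commonNeighbors] at hw
  refine ⟨w, hw.1, fun w' => ⟨fun hw'd => ?_, fun h => h ▸ hw.2.symm⟩⟩
  have huw' : G.Adj u w' := by
    have := hT.dist_eq_dist_add_one_of_adj u hw'd
    have := hdist w'
    rw [← dist_eq_one_iff_adj]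
    omega
  exact hT.isAcyclic.subsingleton_commonNeighbors hud ⟨huw', hw'd.symm⟩ hw

variable (G) in
def spiderMap (u : V) (p : {v // 2 ≤ G.dist u v} → V) :
    Option ({v // G.dist u v = 1 ∧ v ∉ Set.range p} ⊕ {v // 2 ≤ G.dist u v}) ⊕
      {v // 2 ≤ G.dist u v} → V :=
  Sum.elim (Option.elim · u (Sum.elim Subtype.val p)) Subtype.val

lemma dist_spiderMap {u : V} (hdist : ∀ v, G.dist u v ≤ 2) {p : {v // 2 ≤ G.dist u v} → V}
    (hpu : ∀ d, G.Adj u (p d)) (x) :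
    G.dist u (spiderMap G u p x) = Sum.elim (Option.elim · 0 fun _ => 1) (fun _ => 2) x := by
  rcases x with ((_ | f | d) | d)
  · exact dist_self
  · exact f.2.1
  · exact dist_eq_one_iff_adj.mpr (hpu d)
  · exact le_antisymm (hdist d) d.2

lemma bijective_spiderMap (hG : G.Connected) {u : V} (hdist : ∀ v, G.dist u v ≤ 2)
    {p : {v // 2 ≤ G.dist u v} → V} (hp : Function.Injective p) (hpu : ∀ d, G.Adj u (p d)) :
    Function.Bijective (spiderMap G u p) := by
  refine ⟨fun x y hxy => ?_, fun v => ?_⟩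
  · have hl := dist_spiderMap hdist hpu x
    rw [hxy, dist_spiderMap hdist hpu y] at hl
    have hF : ∀ (f : {v // G.dist u v = 1 ∧ v ∉ Set.range p}) d, (f : V) ≠ p d :=
      fun f d h => f.2.2 ⟨d, h.symm⟩
    rcases x with ((_ | f | d) | d) <;> rcases y with ((_ | f' | d') | d') <;>
      simp [spiderMap, hp.eq_iff, hF, (hF _ _).symm] at hl hxy ⊢ <;>
      first | exact hxy | exact Subtype.ext hxy
  · obtain h | h | h : G.dist u v = 0 ∨ G.dist u v = 1 ∨ 2 ≤ G.dist u v := by omega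
    · exact ⟨.inl none, hG.dist_eq_zero_iff.mp h⟩
    · by_cases hv : v ∈ Set.range p
      · obtain ⟨d, rfl⟩ := hv
        exact ⟨.inl (some (.inr d)), rfl⟩
      · exact ⟨.inl (some (.inl ⟨v, h, hv⟩)), rfl⟩
    · exact ⟨.inr ⟨v, h⟩, rfl⟩

theorem IsTree.nonempty_spider_iso (hT : G.IsTree) {u : V} (hdist : ∀ v, G.dist u v ≤ 2)
    (p : {v // 2 ≤ G.dist u v} → V) (hp : Function.Injective p) (hpu : ∀ d, G.Adj u (p d))
    (hpd : ∀ (d : {v // 2 ≤ G.dist u v}) w, G.Adj w d ↔ w = p d) :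
    Nonempty (spider {v // G.dist u v = 1 ∧ v ∉ Set.range p} {v // 2 ≤ G.dist u v} ≃g G) := by
  refine ⟨⟨Equiv.ofBijective _ (bijective_spiderMap hT.connected hdist hp hpu), fun {x y} => ?_⟩⟩
  change G.Adj (spiderMap G u p x) (spiderMap G u p y) ↔ (spider _ _).Adj x y
  have hadj := hT.dist_eq_dist_add_one_of_adj u (v := spiderMap G u p x) (w := spiderMap G u p y)
  rw [dist_spiderMap hdist hpu, dist_spiderMap hdist hpu] at hadj
  have hF : ∀ (f : {v // G.dist u v = 1 ∧ v ∉ Set.range p}) d, (f : V) ≠ p d :=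
    fun f d h => f.2.2 ⟨d, h.symm⟩
  have huF : ∀ f : {v // G.dist u v = 1 ∧ v ∉ Set.range p}, G.Adj u f :=
    fun f => dist_eq_one_iff_adj.mp f.2.1
  have hpd' : ∀ (d : {v // 2 ≤ G.dist u v}) w, G.Adj d w ↔ w = p d := by
    simpa [adj_comm] using hpd
  rcases x with ((_ | f | d) | d) <;> rcases y with ((_ | f' | d') | d') <;>
    simp [spiderMap, spider, spiderRel, huF, (huF _).symm, hpu, (hpu _).symm, hpd, hpd',
      hp.eq_iff, hF] at hadj ⊢ <;>
    exact hadj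

section Fintype

variable [Fintype V]

open Finset

lemma Connected.sum_min_dist_two (hG : G.Connected) (u : V) :
    ∑ v, min (G.dist u v) 2 = Fintype.card V - 1 + #{v | 2 ≤ G.dist u v} := by
  classical
  have h : ∀ v, min (G.dist u v) 2 =
      (if v ≠ u then 1 else 0) + if 2 ≤ G.dist u v then 1 else 0 := by
    intro v
    have := hG.dist_eq_zero_iff (u := u) (v := v)
    split_ifs <;> grind
  rw [sum_congr rfl fun v _ => h v, sum_add_distrib, sum_boole, sum_boole, filter_ne',
    card_erase_of_mem (mem_univ u), card_univ]
  rfl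

lemma Connected.card_sub_one_add_le_status (hG : G.Connected) (u : V) :
    Fintype.card V - 1 + #{v | 2 ≤ G.dist u v} ≤ status G u :=
  hG.sum_min_dist_two u ▸ sum_le_sum fun _ _ => min_le_left _ _

lemma Connected.status_eq_iff (hG : G.Connected) (u : V) :
    status G u = Fintype.card V - 1 + #{v | 2 ≤ G.dist u v} ↔ ∀ v, G.dist u v ≤ 2 := by
  rw [← hG.sum_min_dist_two u, status, eq_comm,
    sum_eq_sum_iff_of_le fun v _ => min_le_left _ _]
  simp

lemma IsTree.ncard_edgeSet_le (hT : G.IsTree) {M : G.Subgraph} (hM : M.IsMatching) (u : V) :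
    M.edgeSet.ncard ≤ #{v | 2 ≤ G.dist u v} + 1 := by
  classical
  refine (hM.ncard_edgeSet_le_card (c := insert u ({v | 2 ≤ G.dist u v} : Finset V)) ?_).trans
    (card_insert_le _ _)
  intro a b hab
  have := hT.connected.dist_eq_zero_iff (u := u) (v := a)
  have := hT.connected.dist_eq_zero_iff (u := u) (v := b)
  have := hT.dist_eq_dist_add_one_of_adj u hab
  simp only [coe_insert, coe_filter, mem_univ, true_and, Set.mem_insert_iff, Set.mem_ofPred_eq]
  grind

lemma IsTree.injective_of_isMatching (hT : G.IsTree) {u : V} (p : {v // 2 ≤ G.dist u v} → V)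
    (hpd : ∀ (d : {v // 2 ≤ G.dist u v}) w, G.Adj w d ↔ w = p d) {M : G.Subgraph}
    (hM : M.IsMatching) (hMcard : #{v | 2 ≤ G.dist u v} + 1 ≤ M.edgeSet.ncard) :
    Function.Injective p := by
  classical
  have hcover : G.IsVertexCover ↑(insert u (univ.image p)) := by
    intro a b hab
    wlog h : G.dist u a = G.dist u b + 1 generalizing a b with H
    · have := hT.dist_eq_dist_add_one_of_adj u hab
      exact (H hab.symm (by omega)).symm
    simp only [coe_insert, coe_image, coe_univ, Set.image_univ, Set.mem_insert_iff, Set.mem_range]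
    by_cases hb : G.dist u b = 0
    · exact Or.inr (Or.inl (hT.connected.dist_eq_zero_iff.mp hb).symm)
    · exact Or.inr (Or.inr ⟨⟨a, by omega⟩, ((hpd ⟨a, by omega⟩ b).mp hab.symm).symm⟩)
  have hcard : #(univ.image p) = #(univ : Finset {v // 2 ≤ G.dist u v}) := by
    have := (hM.ncard_edgeSet_le_card hcover).trans (card_insert_le _ _)
    exact le_antisymm card_image_le (by rw [card_univ, Fintype.card_subtype]; omega)
  simpa using card_image_iff.mp hcard

theorem IsTree.nonempty_iso_spider (hT : G.IsTree) {u : V} (hdist : ∀ v, G.dist u v ≤ 2)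
    {M : G.Subgraph} (hM : M.IsMatching) {k : ℕ} (hk : #{v | 2 ≤ G.dist u v} = k)
    (hMcard : k + 1 ≤ M.edgeSet.ncard) :
    Nonempty (G ≃g spider (Fin (Fintype.card V - 2 * k - 1)) (Fin k)) := by
  classical
  choose p hpu hpd using fun d : {v // 2 ≤ G.dist u v} =>
    hT.exists_adj_and_adj_iff_of_two_le_dist hdist d.2
  have hp := hT.injective_of_isMatching p hpd hM (hk ▸ hMcard)
  obtain ⟨e⟩ := hT.nonempty_spider_iso hdist p hp hpu hpd
  have hD : Fintype.card {v // 2 ≤ G.dist u v} = k := (Fintype.card_subtype _).trans hk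
  have hV := Fintype.card_congr e.toEquiv
  simp only [Fintype.card_sum, Fintype.card_option, hD] at hV
  exact ⟨e.symm.trans (spiderCongr (Fintype.equivFinOfCardEq (by omega))
    (Fintype.equivFinOfCardEq hD))⟩

end Fintype

end SimpleGraph

/-- Lower bound on the minimum status of a tree with given order and matching
number, with equality iff `T ≅ A_{n,m}`. -/
theorem stmt3 [Fintype V] (T : SimpleGraph V) (n m : ℕ)
    (hn : Fintype.card V = n) (hT : T.IsTree)
    (hm : matchingNumber T = m) (hm1 : 1 ≤ m) (hm2 : 2 * m ≤ n) :
    n + m - 2 ≤ minStatus T ∧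
      (minStatus T = n + m - 2 ↔ Nonempty (T ≃g treeA n m)) := by
  obtain ⟨M, hM, hMm⟩ := exists_isMatching_ncard_eq_matchingNumber T
  rw [hm] at hMm
  have hlow : ∀ u, n + m - 2 ≤ status T u := fun u => by
    have := hT.connected.card_sub_one_add_le_status u
    have := hT.ncard_edgeSet_le hM u
    omega
  have := hT.connected.nonempty
  have hmin : n + m - 2 ≤ minStatus T :=
    le_csInf (Set.range_nonempty _) (Set.forall_mem_range.mpr hlow)
  obtain ⟨e'⟩ := nonempty_spider_iso_treeA hm1 hm2
  refine ⟨hmin, fun heq => ?_, fun ⟨e⟩ => le_antisymm ?_ hmin⟩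
  · obtain ⟨u, hu⟩ := Nat.sInf_mem (Set.range_nonempty (status T))
    replace hu : status T u = n + m - 2 := hu.trans heq
    have := hT.connected.card_sub_one_add_le_status u
    have := hT.ncard_edgeSet_le hM u
    obtain ⟨e⟩ := hT.nonempty_iso_spider ((hT.connected.status_eq_iff u).mp (by omega)) hM
      (k := m - 1) (by omega) (by omega)
    rw [hn] at e
    exact ⟨e.trans ((spiderCongr (finCongr (by omega)) (Equiv.refl _)).trans e')⟩
  · calc minStatus T ≤ status T ((e'.trans e.symm) (.inl none)) := Nat.sInf_le ⟨_, rfl⟩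
      _ ≤ n - 2 * m + 1 + 3 * (m - 1) := by
        rw [Iso.status_eq]
        simpa using status_spider_le (Fin (n - 2 * m + 1)) (Fin (m - 1))
      _ = n + m - 2 := by omega
end

section
/- Let G be a connected graph on n >= 4 vertices with matching number m, where 1 <= m <= floor(n/2). Then s(G) <= m(n - m). -/
open SimpleGraph

variable {V : Type*}

/-!
Take a spanning tree `T` of `G` and a longest path `P` of `T`, of length `d`, and put
`e = ⌈d/2⌉`. Every vertex `v` joins `P` at some vertex `P_k`, and since no path of `T` is longer
than `P`, the middle vertex `u` of `P` lies within distance `e` of `v`. The vertices of `P`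
contribute `∑ j ≤ d, |j - ⌊d/2⌋| = e(d + 1) - e²` to the status of `u` and each of the other
`n - d - 1` vertices at most `e`, so `s(G) ≤ s_T(u) ≤ e(n - e)`. Every other edge of `P` gives a
matching of size `e`, so `e ≤ m ≤ n - m`, and `x(n - x)` increases for `x ≤ n/2`.
-/

namespace SimpleGraph

variable {G T : SimpleGraph V} {u v x y : V}

namespace Walk

lemma dist_getVert_le_sub (p : G.Walk u v) {i j : ℕ} (hij : i ≤ j) :
    G.dist (p.getVert i) (p.getVert j) ≤ j - i := by
  have hend : (p.drop i).getVert (j - i) = p.getVert j := by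
    rw [drop_getVert, Nat.add_sub_cancel' hij]
  calc G.dist (p.getVert i) (p.getVert j)
      ≤ (((p.drop i).take (j - i)).copy rfl hend).length := dist_le _
    _ ≤ j - i := by simp [take_length]

lemma dist_getVert_le_dist (p : G.Walk u v) (i j : ℕ) :
    G.dist (p.getVert i) (p.getVert j) ≤ Nat.dist i j := by
  rcases le_total i j with hij | hji
  · exact (p.dist_getVert_le_sub hij).trans_eq (Nat.dist_eq_sub_of_le hij).symm
  · rw [dist_comm, Nat.dist_comm]
    exact (p.dist_getVert_le_sub hji).trans_eq (Nat.dist_eq_sub_of_le hji).symm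

lemma IsPath.append_of_support_subset {w : V} {q : G.Walk u w} {r : G.Walk w v}
    (hq : q.IsPath) (hr : r.IsPath) (h : ∀ a ∈ q.support, a ∈ r.support → a = w) :
    (q.append r).IsPath := by
  have hr' := hr.support_nodup
  rw [← cons_tail_support r, List.nodup_cons] at hr'
  rw [isPath_def, support_append, List.nodup_append]
  refine ⟨hq.support_nodup, hr'.2, fun a ha b hb hab => ?_⟩
  subst hab
  exact hr'.1 (h a ha (List.mem_of_mem_tail hb) ▸ hb)

theorem IsPath.exists_isMatching_encard : ∀ {u v : V} {p : G.Walk u v}, p.IsPath →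
    ∃ M : G.Subgraph, M.IsMatching ∧ M.verts ⊆ {w | w ∈ p.support} ∧
      M.edgeSet.encard = ((p.length + 1) / 2 : ℕ)
  | _, _, .nil, _ => ⟨⊥, by simp [Subgraph.IsMatching]⟩
  | _, _, .cons h .nil, _ =>
    ⟨G.subgraphOfAdj h, .subgraphOfAdj h, by simp [Set.subset_def], by simp⟩
  | a, _, .cons (v := b) h (.cons h' q), hp => by
    rw [cons_isPath_iff, cons_isPath_iff, support_cons, List.mem_cons, not_or] at hp
    obtain ⟨⟨hq, hbq⟩, -, haq⟩ := hp
    obtain ⟨M, hM, hMq, hcard⟩ := hq.exists_isMatching_encard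
    have haM : a ∉ M.verts := fun ha => haq (hMq ha)
    have hbM : b ∉ M.verts := fun hb => hbq (hMq hb)
    refine ⟨G.subgraphOfAdj h ⊔ M, (Subgraph.IsMatching.subgraphOfAdj h).sup hM ?_, ?_, ?_⟩
    · rw [Set.disjoint_left]
      intro z hz hzM
      have hz' := (G.subgraphOfAdj h).support_subset_verts hz
      simp only [subgraphOfAdj_verts, Set.mem_insert_iff, Set.mem_singleton_iff] at hz'
      rcases hz' with rfl | rfl
      exacts [haM (M.support_subset_verts hzM), hbM (M.support_subset_verts hzM)]
    · rintro z (hz | hz)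
      · simp only [subgraphOfAdj_verts, Set.mem_insert_iff, Set.mem_singleton_iff] at hz
        rcases hz with rfl | rfl <;> simp
      · exact List.mem_cons_of_mem _ (List.mem_cons_of_mem _ (hMq hz))
    · have hnot : s(a, b) ∉ M.edgeSet := fun he => haM (M.edge_vert he)
      rw [Subgraph.edgeSet_sup, edgeSet_subgraphOfAdj, Set.singleton_union,
        Set.encard_insert_of_notMem hnot, hcard]
      simp only [length_cons]
      norm_cast
      omega

end Walk

lemma Connected.exists_isPath_forall_dist_le [Finite V] (hG : G.Connected) :
    ∃ (x y : V) (P : G.Walk x y), P.IsPath ∧ ∀ a b, G.dist a b ≤ P.length := by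
  have := hG.nonempty
  obtain ⟨⟨x, y⟩, hxy⟩ := Finite.exists_max fun p : V × V => G.dist p.1 p.2
  obtain ⟨P, hP, hlen⟩ := hG.exists_path_of_dist x y
  exact ⟨x, y, P, hP, fun a b => hlen ▸ hxy (a, b)⟩

lemma IsTree.length_eq_dist (hT : T.IsTree) {P : T.Walk u v} (hP : P.IsPath) :
    P.length = T.dist u v := by
  obtain ⟨Q, hQ, hlen⟩ := hT.connected.exists_path_of_dist u v
  rw [← hlen, (hT.existsUnique_path u v).unique hP hQ]

lemma IsTree.exists_dist_eq_dist_getVert_add (hT : T.IsTree) {P : T.Walk x y} (hP : P.IsPath)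
    (v : V) : ∃ k ≤ P.length, T.dist v x = T.dist v (P.getVert k) + k ∧
      T.dist v y = T.dist v (P.getVert k) + (P.length - k) := by
  classical
  obtain ⟨Q, hQ, -⟩ := hT.connected.exists_path_of_dist v x
  obtain ⟨w, hwP, hwQ, hfirst⟩ :=
    Q.exists_mem_support_forall_mem_support_imp_eq P.support.toFinset ⟨x, by simp⟩
  obtain ⟨k, rfl, hk⟩ := Walk.mem_support_iff_exists_getVert.mp (List.mem_toFinset.mp hwP)
  set q := Q.takeUntil _ hwQ
  have hq : q.IsPath := hQ.takeUntil hwQ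
  have hjoin : ∀ {z : V} (r : T.Walk (P.getVert k) z), r.IsPath → r.support ⊆ P.support →
      T.dist v z = T.dist v (P.getVert k) + r.length := fun r hr hrP => by
    rw [← hT.length_eq_dist hq, ← Walk.length_append, hT.length_eq_dist]
    exact hq.append_of_support_subset hr
      fun a ha har => hfirst a (List.mem_toFinset.mpr (hrP har)) ha
  refine ⟨k, hk, ?_, ?_⟩
  · rw [hjoin _ (hP.take k).reverse, Walk.length_reverse, Walk.take_length, min_eq_left hk]
    rw [Walk.support_reverse]
    exact fun a ha => ((P.isSubwalk_take k).support_subset (List.mem_reverse.mp ha))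
  · rw [hjoin _ (hP.drop k), Walk.drop_length]
    exact (P.isSubwalk_drop k).support_subset

lemma IsTree.dist_getVert_half_le (hT : T.IsTree) {P : T.Walk x y} (hP : P.IsPath)
    (hdiam : ∀ a b, T.dist a b ≤ P.length) (v : V) :
    T.dist (P.getVert (P.length / 2)) v ≤ (P.length + 1) / 2 := by
  obtain ⟨k, hk, hx, hy⟩ := hT.exists_dist_eq_dist_getVert_add hP v
  have hxv := hdiam v x
  have hyv := hdiam v y
  have hck := P.dist_getVert_le_dist (P.length / 2) k
  have htri : T.dist (P.getVert (P.length / 2)) v ≤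
      T.dist (P.getVert (P.length / 2)) (P.getVert k) + T.dist (P.getVert k) v :=
    hT.connected.dist_triangle
  have hcomm : T.dist (P.getVert k) v = T.dist v (P.getVert k) := dist_comm
  unfold Nat.dist at hck
  omega

end SimpleGraph

theorem Nat.sum_range_dist_half_add_sq :
    ∀ d : ℕ, ∑ j ∈ Finset.range (d + 1), Nat.dist (d / 2) j + ((d + 1) / 2) ^ 2 =
      (d + 1) / 2 * (d + 1)
  | 0 => rfl
  | 1 => rfl
  | d + 2 => by
    have ih := sum_range_dist_half_add_sq d
    rw [Finset.sum_range_succ', Finset.sum_range_succ, show (d + 2) / 2 = d / 2 + 1 by omega,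
      show (d + 2 + 1) / 2 = (d + 1) / 2 + 1 by omega]
    simp only [Nat.dist_add_add_right]
    rw [Nat.dist_eq_sub_of_le (by omega : d / 2 ≤ d + 1), Nat.dist_comm,
      Nat.dist_eq_sub_of_le (Nat.zero_le _), show d + 1 - d / 2 = (d + 1) / 2 + 1 by omega,
      Nat.sub_zero]
    have hd : d / 2 + (d + 1) / 2 = d := by omega
    generalize d / 2 = c at *
    generalize (d + 1) / 2 = e at *
    subst hd
    linarith

lemma Nat.mul_sub_le_mul_sub {a b n : ℕ} (hab : a ≤ b) (hn : a + b ≤ n) :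
    a * (n - a) ≤ b * (n - b) := by
  obtain ⟨k, rfl⟩ := Nat.exists_eq_add_of_le hab
  obtain ⟨l, rfl⟩ := Nat.exists_eq_add_of_le hn
  rw [show a + (a + k) + l - a = a + k + l by omega,
    show a + (a + k) + l - (a + k) = a + l by omega]
  nlinarith

section

variable {G T : SimpleGraph V} {u v x y : V}

lemma ncard_edgeSet_le_matchingNumber [Finite V] {M : G.Subgraph} (hM : M.IsMatching) :
    M.edgeSet.ncard ≤ matchingNumber G :=
  le_csSup ⟨Nat.card (Sym2 V), by rintro k ⟨N, -, rfl⟩; exact Set.ncard_le_card _⟩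
    ⟨M, hM, rfl⟩

lemma SimpleGraph.Walk.IsPath.length_add_one_div_two_le_matchingNumber [Finite V]
    {p : G.Walk u v} (hp : p.IsPath) : (p.length + 1) / 2 ≤ matchingNumber G := by
  obtain ⟨M, hM, -, hcard⟩ := hp.exists_isMatching_encard
  calc (p.length + 1) / 2 = M.edgeSet.ncard := by rw [Set.ncard_def, hcard, ENat.toNat_natCast]
    _ ≤ matchingNumber G := ncard_edgeSet_le_matchingNumber hM

lemma status_anti [Fintype V] (h : T ≤ G) (hT : T.Connected) (u : V) :
    status G u ≤ status T u :=
  Finset.sum_le_sum fun v _ => (hT u v).dist_anti h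

lemma status_getVert_half_add_sq_le [Fintype V] {P : G.Walk x y} (hP : P.IsPath)
    (hecc : ∀ v, G.dist (P.getVert (P.length / 2)) v ≤ (P.length + 1) / 2) :
    status G (P.getVert (P.length / 2)) + ((P.length + 1) / 2) ^ 2 ≤
      (P.length + 1) / 2 * Fintype.card V := by
  classical
  set d := P.length
  set S := (Finset.range (d + 1)).image P.getVert
  have hinj : Set.InjOn P.getVert (Finset.range (d + 1)) := fun i hi j hj =>
    hP.getVert_injOn (Nat.lt_succ_iff.mp (Finset.mem_range.mp hi))
      (Nat.lt_succ_iff.mp (Finset.mem_range.mp hj))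
  have hS : S.card = d + 1 := by rw [Finset.card_image_of_injOn hinj, Finset.card_range]
  have hSV : d + 1 ≤ Fintype.card V := hS ▸ S.card_le_univ
  have hpath : ∑ v ∈ S, G.dist (P.getVert (d / 2)) v ≤
      ∑ j ∈ Finset.range (d + 1), Nat.dist (d / 2) j := by
    rw [Finset.sum_image hinj]
    exact Finset.sum_le_sum fun j _ => P.dist_getVert_le_dist _ _
  have hrest : ∑ v ∈ Finset.univ \ S, G.dist (P.getVert (d / 2)) v ≤
      (Fintype.card V - (d + 1)) * ((d + 1) / 2) := by
    calc _ ≤ (Finset.univ \ S).card • ((d + 1) / 2) :=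
          Finset.sum_le_card_nsmul _ _ _ fun v _ => hecc v
      _ = _ := by rw [Finset.card_sdiff_of_subset S.subset_univ, Finset.card_univ, hS, smul_eq_mul]
  have hsplit : (Fintype.card V - (d + 1)) * ((d + 1) / 2) + (d + 1) / 2 * (d + 1) =
      (d + 1) / 2 * Fintype.card V := by
    rw [mul_comm, ← mul_add, Nat.sub_add_cancel hSV]
  rw [status, ← Finset.sum_sdiff S.subset_univ]
  have := Nat.sum_range_dist_half_add_sq d
  omega

end

theorem stmt6_general [Fintype V] (G : SimpleGraph V) (n m : ℕ)
    (hn : Fintype.card V = n) (hG : G.Connected)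
    (hm : matchingNumber G = m) (hm2 : 2 * m ≤ n) :
    minStatus G ≤ m * (n - m) := by
  obtain ⟨T, hTG, hT⟩ := hG.exists_isTree_le
  obtain ⟨x, y, P, hP, hdiam⟩ := hT.connected.exists_isPath_forall_dist_le
  set u := P.getVert (P.length / 2)
  set e := (P.length + 1) / 2
  have hstatus : status T u + e ^ 2 ≤ e * n :=
    hn ▸ status_getVert_half_add_sq_le hP (hT.dist_getVert_half_le hP hdiam)
  have hem : e ≤ m := by
    simpa [← hm] using (hP.mapLe hTG).length_add_one_div_two_le_matchingNumber
  calc minStatus G ≤ status G u := Nat.sInf_le ⟨u, rfl⟩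
    _ ≤ status T u := status_anti hTG hT.connected u
    _ ≤ e * (n - e) := by rw [Nat.mul_sub, ← sq]; omega
    _ ≤ m * (n - m) := Nat.mul_sub_le_mul_sub hem (by omega)

/-- Upper bound on the minimum status of a connected graph with given order and
matching number. -/
theorem stmt6 [Fintype V] (G : SimpleGraph V) (n m : ℕ)
    (hn : Fintype.card V = n) (h4 : 4 ≤ n) (hG : G.Connected)
    (hm : matchingNumber G = m) (hm1 : 1 ≤ m) (hm2 : 2 * m ≤ n) :
    minStatus G ≤ m * (n - m) :=
  stmt6_general G n m hn hG hm hm2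
end

section
/- The minimum status of the dumbbell D_n(ceil((n+1)/2) - m, floor((n+1)/2) - m) equals m(n - m), for integers n >= 4 and 1 <= m <= floor(n/2). -/
open SimpleGraph

variable {V : Type*}

/-!
With `m = k + 1` the dumbbell is `dumbbell (2k+1+p+q) p q` with `q ≤ p ≤ q + 1`. Let `π` project
it onto its path `0, …, 2k`, sending the left leaves to `-1` and the right leaves to `2k+1`. Since
`π` is `1`-Lipschitz, `status u ≥ ∑ v |π u - π v|`, with equality at the middle vertex `k`. As
`p - q ∈ {0, 1}`, the point `k` is a median of the values of `π`, so it minimises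
`s ↦ ∑ v |s - π v|`, and the minimum is `(k+1)(k+p+q) = m(n-m)`.
-/

open Finset

namespace SimpleGraph

variable {G : SimpleGraph V}

theorem Walk.abs_sub_le_length (f : V → ℤ) (hf : ∀ a b, G.Adj a b → |f a - f b| ≤ 1)
    {u v : V} (w : G.Walk u v) : |f u - f v| ≤ w.length := by
  induction w with
  | nil => simp
  | @cons a b c hab w ih =>
    rw [length_cons, Nat.cast_succ]
    linarith [abs_sub_le (f a) (f b) (f c), hf a b hab]

theorem Reachable.abs_sub_le_dist (f : V → ℤ) (hf : ∀ a b, G.Adj a b → |f a - f b| ≤ 1)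
    {u v : V} (h : G.Reachable u v) : |f u - f v| ≤ G.dist u v := by
  obtain ⟨w, hw⟩ := h.exists_walk_length_eq_dist
  exact hw ▸ w.abs_sub_le_length f hf

theorem reachable_and_dist_le_of_descent (c : V) (φ : V → ℕ) (h0 : ∀ v, φ v = 0 → v = c)
    (hdesc : ∀ v, φ v ≠ 0 → ∃ w, G.Adj v w ∧ φ w < φ v) (v : V) :
    G.Reachable c v ∧ G.dist c v ≤ φ v := by
  induction hv : φ v using Nat.strong_induction_on generalizing v with
  | _ k ih =>
    rcases Nat.eq_zero_or_pos k with rfl | hk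
    · obtain rfl := h0 v hv
      simp
    · obtain ⟨w, hvw, hw⟩ := hdesc v (by omega)
      obtain ⟨hcw, hd⟩ := ih (φ w) (hv ▸ hw) w rfl
      have hwv := hvw.symm
      refine ⟨hcw.trans hwv.reachable, ?_⟩
      have := hwv.reachable.dist_triangle_right c
      rw [dist_eq_one_iff_adj.mpr hwv] at this
      omega

end SimpleGraph

theorem two_mul_sum_range_abs_sub {L : ℕ} {s : ℤ} (h1 : -1 ≤ s) (h2 : s ≤ L) :
    2 * ∑ k ∈ range L, |s - k| = s * (s + 1) + (L - 1 - s) * (L - s) := by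
  induction L generalizing s with
  | zero =>
    obtain rfl | rfl : s = -1 ∨ s = 0 := by omega
    all_goals simp
  | succ L ih =>
    rcases h2.lt_or_eq with h2 | rfl
    · rw [sum_range_succ, mul_add, ih h1 (by omega), abs_of_nonpos (by omega)]
      push_cast
      ring
    · have := ih (s := L) (by omega) le_rfl
      simp only [sum_range_succ', Nat.cast_add, Nat.cast_one, add_sub_add_right_eq_sub]
      rw [mul_add, this, abs_of_nonneg (by omega)]
      ring

/-- The coordinate of vertex `i` of `dumbbell (L + p + q) p q` along its path, with the
left leaves at `-1` and the right leaves at `L`. -/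
def dumbbellPos (L p i : ℕ) : ℤ := if i < L then i else if i < L + p then -1 else L

section Dumbbell

variable {L p q : ℕ}

theorem dumbbellPos_mem_Icc (i : ℕ) : dumbbellPos L p i ∈ Set.Icc (-1) (L : ℤ) := by
  rw [Set.mem_Icc, dumbbellPos]
  split_ifs <;> omega

theorem abs_sub_dumbbellPos_le_one_of_adj {a b : Fin (L + p + q)}
    (h : (dumbbell (L + p + q) p q).Adj a b) :
    |dumbbellPos L p a - dumbbellPos L p b| ≤ 1 := by
  simp only [dumbbell, SimpleGraph.fromRel_adj] at h
  rw [abs_le]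
  unfold dumbbellPos
  split_ifs <;> omega

theorem dumbbell_reachable_and_dist_le {c : Fin (L + p + q)} (hc : (c : ℕ) < L)
    (v : Fin (L + p + q)) :
    (dumbbell (L + p + q) p q).Reachable c v ∧
      (dumbbell (L + p + q) p q).dist c v ≤ |(c : ℤ) - dumbbellPos L p v| := by
  have hv := (dumbbell (L + p + q) p q).reachable_and_dist_le_of_descent c
    (fun v => ((c : ℤ) - dumbbellPos L p v).natAbs) ?_ ?_ v
  · obtain ⟨hr, hd⟩ := hv
    exact ⟨hr, by rw [← Int.natCast_natAbs]; exact_mod_cast hd⟩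
  · intro v hv
    ext
    unfold dumbbellPos at hv
    split_ifs at hv <;> omega
  · intro v hv
    simp only [dumbbellPos, ne_eq, Int.natAbs_eq_zero] at hv
    refine ⟨⟨if v < L then (if c < v then v - 1 else v + 1) else if v < L + p then 0 else L - 1,
      by split_ifs <;> omega⟩, ?_, ?_⟩
    · simp only [dumbbell, SimpleGraph.fromRel_adj, ne_eq, Fin.ext_iff]
      split_ifs at hv ⊢ <;> omega
    · simp only [dumbbellPos]
      split_ifs at hv ⊢ <;> omega

theorem sum_dumbbellPos {M : Type*} [AddCommMonoid M] (g : ℤ → M) :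
    ∑ v : Fin (L + p + q), g (dumbbellPos L p v) = ∑ k ∈ range L, g k + p • g (-1) + q • g L := by
  rw [Fin.sum_univ_eq_sum_range (fun i => g (dumbbellPos L p i)), sum_range_add, sum_range_add]
  congr 1
  congr 1
  · exact sum_congr rfl fun k hk => by rw [dumbbellPos, if_pos (mem_range.mp hk)]
  · rw [sum_congr rfl fun k hk => ?_, sum_const, card_range]
    rw [dumbbellPos, if_neg (by omega), if_pos (by simp at hk; omega)]
  · rw [sum_congr rfl fun k _ => ?_, sum_const, card_range]
    rw [dumbbellPos, if_neg (by omega), if_neg (by omega)]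

end Dumbbell

theorem sum_abs_sub_dumbbellPos (k p q : ℕ) {s : ℤ} (h1 : -1 ≤ s) (h2 : s ≤ 2 * k + 1) :
    ∑ v : Fin (2 * k + 1 + p + q), |s - dumbbellPos (2 * k + 1) p v| =
      (k + 1) * (k + p + q) + (s - k) * (s - k + p - q) := by
  have h := two_mul_sum_range_abs_sub (L := 2 * k + 1) h1 (by push_cast; omega)
  rw [sum_dumbbellPos (fun x => |s - x|), abs_of_nonneg (by omega : (0 : ℤ) ≤ s - -1),
    abs_of_nonpos (by push_cast; omega : s - ((2 * k + 1 : ℕ) : ℤ) ≤ 0)]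
  push_cast at h ⊢
  simp only [nsmul_eq_mul]
  linarith

section DumbbellStatus

variable {k p q : ℕ}

theorem le_status_dumbbell (hqp : q ≤ p) (hpq : p ≤ q + 1) (u : Fin (2 * k + 1 + p + q)) :
    (k + 1) * (k + p + q) ≤ status (dumbbell (2 * k + 1 + p + q) p q) u := by
  have hreach (v : Fin (2 * k + 1 + p + q)) := (dumbbell_reachable_and_dist_le
    (c := ⟨k, by omega⟩) (by simp only; omega) v).1
  obtain ⟨h1, h2⟩ := dumbbellPos_mem_Icc (L := 2 * k + 1) (p := p) u
  set s := dumbbellPos (2 * k + 1) p u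
  have hmedian : 0 ≤ (s - k) * (s - k + p - q) := by
    rcases le_or_gt 0 (s - k) with h | h
    · exact mul_nonneg h (by omega)
    · exact mul_nonneg_of_nonpos_of_nonpos h.le (by omega)
  zify
  calc ((k + 1) * (k + p + q) : ℤ)
      ≤ ∑ v : Fin (2 * k + 1 + p + q), |s - dumbbellPos (2 * k + 1) p v| := by
        rw [sum_abs_sub_dumbbellPos k p q h1 (by exact_mod_cast h2)]
        linarith
    _ ≤ ∑ v, ((dumbbell (2 * k + 1 + p + q) p q).dist u v : ℤ) :=
        sum_le_sum fun v _ => ((hreach u).symm.trans (hreach v)).abs_sub_le_dist _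
          fun _ _ => abs_sub_dumbbellPos_le_one_of_adj
    _ = status (dumbbell (2 * k + 1 + p + q) p q) u := by simp [status]

theorem status_dumbbell_center_le :
    status (dumbbell (2 * k + 1 + p + q) p q) ⟨k, by omega⟩ ≤ (k + 1) * (k + p + q) := by
  zify
  calc (status (dumbbell (2 * k + 1 + p + q) p q) ⟨k, by omega⟩ : ℤ)
      = ∑ v, ((dumbbell (2 * k + 1 + p + q) p q).dist ⟨k, by omega⟩ v : ℤ) := by simp [status]
    _ ≤ ∑ v : Fin (2 * k + 1 + p + q), |(k : ℤ) - dumbbellPos (2 * k + 1) p v| :=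
        sum_le_sum fun v _ =>
          (dumbbell_reachable_and_dist_le (c := ⟨k, by omega⟩) (by simp only; omega) v).2
    _ = (k + 1) * (k + p + q) := by
        rw [sum_abs_sub_dumbbellPos k p q (by omega) (by omega)]
        ring

theorem minStatus_dumbbell (hqp : q ≤ p) (hpq : p ≤ q + 1) :
    minStatus (dumbbell (2 * k + 1 + p + q) p q) = (k + 1) * (k + p + q) :=
  IsLeast.csInf_eq ⟨⟨_, le_antisymm status_dumbbell_center_le (le_status_dumbbell hqp hpq _)⟩,
    by rintro _ ⟨u, rfl⟩; exact le_status_dumbbell hqp hpq u⟩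

end DumbbellStatus

theorem stmt8_general (n m : ℕ) (hm1 : 1 ≤ m) (hm2 : 2 * m ≤ n) :
    minStatus (dumbbell n ((n + 2) / 2 - m) ((n + 1) / 2 - m)) = m * (n - m) := by
  obtain ⟨k, rfl⟩ : ∃ k, m = k + 1 := ⟨m - 1, by omega⟩
  obtain ⟨p, hp⟩ : ∃ p, p = (n + 2) / 2 - (k + 1) := ⟨_, rfl⟩
  obtain ⟨q, hq⟩ : ∃ q, q = (n + 1) / 2 - (k + 1) := ⟨_, rfl⟩
  obtain rfl : n = 2 * k + 1 + p + q := by omega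
  rw [← hp, ← hq, minStatus_dumbbell (by omega) (by omega)]
  congr 1
  omega

/-- The minimum status of `D_n(⌈(n+1)/2⌉ - m, ⌊(n+1)/2⌋ - m)` equals `m(n-m)`. -/
theorem stmt8 (n m : ℕ) (h4 : 4 ≤ n) (hm1 : 1 ≤ m) (hm2 : 2 * m ≤ n) :
    minStatus (dumbbell n ((n + 2) / 2 - m) ((n + 1) / 2 - m)) = m * (n - m) :=
  stmt8_general n m hm1 hm2
end

section
/- For integers n, p, q with p >= q + 2 and 2(p + q) < n, the minimum status of the caterpillar C_n(p-1, q+1) is strictly greater than the minimum status of C_n(p, q). -/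
/-!
Record each vertex of `C_n(p,q)` by its spine position `pos` and its height (0 on the spine, 1 for
a pendant); distinct vertices are at distance `|pos u - pos v| + height u + height v`. Hence, with
`T(x) = ∑_v |x - pos v|`, every vertex at position `x` has status at least `T(x) + p + q`, with
equality on the spine, so `s(C_n(p,q)) = min T + p + q`.

Going from `C_n(p,q)` to `C_n(p-1,q+1)` moves a single pendant from position `a = p - 1` to
`b = n - p - 2q - 1`, so `T'(x) = T(x) + |x - b| - |x - a|`. For `x < p` this gives
`T'(x) = T(x) + (b - a) > T(x)`. For `x ≥ p` at least `x + p` of the positions lie below `x`,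
so `T(x) - T(x - 1) ≥ 2(x + p) - n` and `T'(x) - T(x - 1) ≥ a + b + 2p - n = 2(p - q - 1) > 0`.
-/

open SimpleGraph

variable {V : Type*}

open Finset

theorem SimpleGraph.dist_eq_of_lipschitz_of_descent (G : SimpleGraph V)
    (d : V → V → ℕ) (hd : ∀ u v, d u v = 0 ↔ u = v)
    (hlip : ∀ u w v, G.Adj u w → d u v ≤ d w v + 1)
    (hdesc : ∀ u v, u ≠ v → ∃ w, G.Adj u w ∧ d w v + 1 = d u v) (u v : V) :
    G.dist u v = d u v := by
  have le_length : ∀ {u v} (p : G.Walk u v), d u v ≤ p.length := by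
    intro u v p
    induction p with
    | nil => exact ((hd _ _).2 rfl).le
    | cons h p ih => rw [Walk.length_cons]; exact (hlip _ _ _ h).trans (by omega)
  have exists_walk : ∀ k u, d u v = k → ∃ p : G.Walk u v, p.length = k := by
    intro k
    induction k with
    | zero => intro u h; obtain rfl := (hd u v).1 h; exact ⟨.nil, rfl⟩
    | succ k ih =>
      intro u h
      obtain ⟨w, hadj, hw⟩ := hdesc u v fun huv => by simp [(hd u v).2 huv] at h
      obtain ⟨p, hp⟩ := ih w (by omega)
      exact ⟨.cons hadj p, by simp [hp]⟩
  obtain ⟨p, hp⟩ := exists_walk _ u rfl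
  obtain ⟨q, hq⟩ := p.reachable.exists_walk_length_eq_dist
  exact le_antisymm (hp ▸ dist_le p) (hq ▸ le_length q)

section SpineDist

variable [DecidableEq V] (pos ht : V → ℕ)

def spineDist (u v : V) : ℕ :=
  if u = v then 0 else Nat.dist (pos u) (pos v) + ht u + ht v

theorem spineDist_le_of_eq_one {u w : V} (huw : spineDist pos ht u w = 1) (v : V) :
    spineDist pos ht u v ≤ spineDist pos ht w v + 1 := by
  rcases eq_or_ne w v with rfl | hwv
  · rw [huw]; simp [spineDist]
  have huw' : u ≠ w := by rintro rfl; simp [spineDist] at huw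
  have htri := Nat.dist.triangle_inequality (pos u) (pos w) (pos v)
  unfold spineDist at huw ⊢
  rw [if_neg huw'] at huw
  rw [if_neg hwv]
  split_ifs <;> omega

theorem sum_spineDist_add_two_mul [Fintype V] (u : V) :
    ∑ v, spineDist pos ht u v + 2 * ht u =
      ∑ v, Nat.dist (pos u) (pos v) + Fintype.card V * ht u + ∑ v, ht v := by
  have hterm : ∀ v, spineDist pos ht u v + (if v = u then 2 * ht u else 0) =
      Nat.dist (pos u) (pos v) + ht u + ht v := by
    intro v
    rcases eq_or_ne v u with rfl | hvu
    · simp [spineDist, two_mul]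
    · rw [spineDist, if_neg hvu.symm, if_neg hvu, add_zero]
  calc ∑ v, spineDist pos ht u v + 2 * ht u
      = ∑ v, (spineDist pos ht u v + if v = u then 2 * ht u else 0) := by
        rw [sum_add_distrib, sum_ite_eq' univ u, if_pos (mem_univ u)]
    _ = ∑ v, (Nat.dist (pos u) (pos v) + ht u + ht v) := sum_congr rfl fun v _ => hterm v
    _ = _ := by simp only [sum_add_distrib, sum_const, card_univ, smul_eq_mul]

end SpineDist

theorem Finset.sum_dist_succ_add_card {ι : Type*} (s : Finset ι) (f : ι → ℕ) (y : ℕ) :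
    ∑ i ∈ s, Nat.dist (y + 1) (f i) + #s =
      ∑ i ∈ s, Nat.dist y (f i) + 2 * #{i ∈ s | f i ≤ y} := by
  rw [card_eq_sum_ones, card_filter, mul_sum, ← sum_add_distrib, ← sum_add_distrib]
  refine sum_congr rfl fun i _ => ?_
  simp only [Nat.dist]
  split_ifs <;> omega

namespace Caterpillar

def pos (n p q v : ℕ) : ℕ :=
  if v < n - p - q then v else if v < n - q then v - (n - p - q) else v - p - q

def height (n p q v : ℕ) : ℕ := if v < n - p - q then 0 else 1

abbrev treeDist (n p q : ℕ) : Fin n → Fin n → ℕ :=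
  spineDist (fun v => pos n p q v) (fun v => height n p q v)

variable {n p q : ℕ}

theorem pos_lt (h : 2 * (p + q) ≤ n) {v : ℕ} (hv : v < n) : pos n p q v < n - p - q := by
  unfold pos; split_ifs <;> omega

theorem pos_of_lt {v : ℕ} (hv : v < n - p - q) : pos n p q v = v := if_pos hv

theorem height_of_lt {v : ℕ} (hv : v < n - p - q) : height n p q v = 0 := if_pos hv

theorem height_of_le {v : ℕ} (hv : n - p - q ≤ v) : height n p q v = 1 := if_neg (by omega)

theorem adj_iff (h : 2 * (p + q) ≤ n) (u v : Fin n) :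
    (caterpillar n p q).Adj u v ↔ treeDist n p q u v = 1 := by
  rcases eq_or_ne u v with rfl | huv
  · simp [spineDist]
  have hu := u.isLt
  have hv := v.isLt
  rw [Fin.ne_iff_vne] at huv
  simp only [caterpillar, fromRel_adj, spineDist, pos, height, Nat.dist, ne_eq, Fin.ext_iff]
  split_ifs <;> omega

theorem treeDist_eq_zero_iff (u v : Fin n) : treeDist n p q u v = 0 ↔ u = v := by
  refine ⟨fun h0 => Fin.ext ?_, fun huv => by simp [huv, spineDist]⟩
  simp only [spineDist, pos, height, Nat.dist, Fin.ext_iff] at h0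
  split_ifs at h0 <;> omega

theorem exists_adj_treeDist_succ (h : 2 * (p + q) ≤ n) {u v : Fin n} (huv : u ≠ v) :
    ∃ w, (caterpillar n p q).Adj u w ∧ treeDist n p q w v + 1 = treeDist n p q u v := by
  simp only [adj_iff h]
  have hpu := pos_lt (p := p) (q := q) h u.isLt
  have hpv := pos_lt (p := p) (q := q) h v.isLt
  rw [Fin.ne_iff_vne] at huv
  have hv : (v : ℕ) < n - p - q ∧ pos n p q v = v ∧ height n p q v = 0 ∨
      n - p - q ≤ v ∧ height n p q v = 1 := by
    unfold pos height; split_ifs <;> omega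
  rcases le_or_gt (n - p - q) (u : ℕ) with hu | hu
  · refine ⟨⟨pos n p q u, by omega⟩, ?_⟩
    simp only [spineDist, Nat.dist, Fin.ext_iff, pos_of_lt hpu, height_of_lt hpu, height_of_le hu]
    split_ifs <;> omega
  obtain hlt | heq | hgt := lt_trichotomy (pos n p q v) u
  · refine ⟨⟨u - 1, by omega⟩, ?_⟩
    simp only [spineDist, Nat.dist, Fin.ext_iff, pos_of_lt hu, height_of_lt hu,
      pos_of_lt (show (u : ℕ) - 1 < n - p - q by omega),
      height_of_lt (show (u : ℕ) - 1 < n - p - q by omega)]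
    split_ifs <;> omega
  · refine ⟨v, ?_⟩
    simp only [spineDist, Nat.dist, Fin.ext_iff, pos_of_lt hu, height_of_lt hu]
    split_ifs <;> omega
  · refine ⟨⟨u + 1, by omega⟩, ?_⟩
    simp only [spineDist, Nat.dist, Fin.ext_iff, pos_of_lt hu, height_of_lt hu,
      pos_of_lt (show (u : ℕ) + 1 < n - p - q by omega),
      height_of_lt (show (u : ℕ) + 1 < n - p - q by omega)]
    split_ifs <;> omega

theorem dist_eq (h : 2 * (p + q) ≤ n) (u v : Fin n) :
    (caterpillar n p q).dist u v = treeDist n p q u v :=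
  dist_eq_of_lipschitz_of_descent _ _ treeDist_eq_zero_iff
    (fun _ _ _ hadj => spineDist_le_of_eq_one _ _ ((adj_iff h _ _).1 hadj) _)
    (fun _ _ huv => exists_adj_treeDist_succ h huv) u v

def posSum (n p q x : ℕ) : ℕ := ∑ i ∈ range n, Nat.dist x (pos n p q i)

theorem sum_height (h : p + q ≤ n) : ∑ v : Fin n, height n p q v = p + q := by
  rw [Fin.sum_univ_eq_sum_range (height n p q),
    ← sum_range_add_sum_Ico _ (show n - p - q ≤ n by omega),
    sum_congr rfl fun i hi => height_of_lt (mem_range.1 hi),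
    sum_congr rfl fun i hi => height_of_le (mem_Ico.1 hi).1]
  simp only [sum_const_zero, sum_const, Nat.card_Ico, smul_eq_mul, mul_one]
  omega

theorem status_add_two_mul_height (h : 2 * (p + q) ≤ n) (u : Fin n) :
    status (caterpillar n p q) u + 2 * height n p q u =
      posSum n p q (pos n p q u) + n * height n p q u + (p + q) := by
  simp only [status, dist_eq h]
  rw [sum_spineDist_add_two_mul, Fintype.card_fin, sum_height (by omega), posSum,
    ← Fin.sum_univ_eq_sum_range (fun i => Nat.dist (pos n p q u) (pos n p q i))]

theorem status_of_lt (h : 2 * (p + q) ≤ n) {y : ℕ} (hy : y < n - p - q) :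
    status (caterpillar n p q) ⟨y, by omega⟩ = posSum n p q y + (p + q) := by
  have := status_add_two_mul_height h ⟨y, by omega⟩
  simp only [pos_of_lt hy, height_of_lt hy] at this
  omega

theorem posSum_add_le_status (h : 2 * (p + q) ≤ n) (u : Fin n) :
    posSum n p q (pos n p q u) + (p + q) ≤ status (caterpillar n p q) u := by
  have := status_add_two_mul_height h u
  have hu := u.isLt
  rcases lt_or_ge (u : ℕ) (n - p - q) with hu' | hu'
  · rw [height_of_lt hu'] at this; omega
  · rw [height_of_le hu'] at this; omega

theorem posSum_add_le_posSum_succ (h : p + q ≤ n) {y : ℕ} (hpy : p ≤ y + 1)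
    (hyL : y + 1 ≤ n - p - q) :
    posSum n p q y + 2 * (y + 1 + p) ≤ posSum n p q (y + 1) + n := by
  have hsum := Finset.sum_dist_succ_add_card (range n) (pos n p q) y
  have hcount : y + 1 + p ≤ #{i ∈ range n | pos n p q i ≤ y} := by
    have hdisj : Disjoint (range (y + 1)) (Ico (n - p - q) (n - q)) := by
      rw [Finset.disjoint_left]; intro i hi hi'; simp only [mem_range, mem_Ico] at hi hi'; omega
    calc y + 1 + p = #(range (y + 1) ∪ Ico (n - p - q) (n - q)) := by
          rw [card_union_of_disjoint hdisj, card_range, Nat.card_Ico]; omega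
      _ ≤ _ := by
          refine card_le_card fun i hi => ?_
          simp only [mem_union, mem_range, mem_Ico, mem_filter] at hi ⊢
          unfold pos; split_ifs <;> omega
  rw [card_range] at hsum
  unfold posSum
  omega

-- Vertex `n - q - 1` is the only one whose position changes: it is the last pendant on the left
-- in `C_n(p,q)` and the first one on the right in `C_n(p-1,q+1)`.
theorem posSum_pred_succ_add_dist (hp : 1 ≤ p) (h : p + q < n) (x : ℕ) :
    posSum n (p - 1) (q + 1) x + Nat.dist x (p - 1) =
      posSum n p q x + Nat.dist x (n - p - 2 * q - 1) := by
  have hk : n - q - 1 ∈ range n := mem_range.2 (by omega)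
  unfold posSum
  rw [← add_sum_erase _ _ hk, ← add_sum_erase _ _ hk,
    sum_congr rfl fun i hi => by
      rw [show pos n (p - 1) (q + 1) i = pos n p q i by
        have := ne_of_mem_erase hi; unfold pos; split_ifs <;> omega]]
  have hk₁ : pos n (p - 1) (q + 1) (n - q - 1) = n - p - 2 * q - 1 := by
    unfold pos; split_ifs <;> omega
  have hk₂ : pos n p q (n - q - 1) = p - 1 := by unfold pos; split_ifs <;> omega
  rw [hk₁, hk₂]
  ring

theorem exists_posSum_lt (h1 : q + 2 ≤ p) (h2 : 2 * (p + q) < n) {x : ℕ} (hx : x < n - p - q) :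
    ∃ y < n - p - q, posSum n p q y < posSum n (p - 1) (q + 1) x := by
  have hshift := posSum_pred_succ_add_dist (n := n) (p := p) (q := q) (by omega) (by omega) x
  rcases lt_or_ge x p with hxp | hxp
  · exact ⟨x, hx, by simp only [Nat.dist] at hshift; omega⟩
  · obtain ⟨y, rfl⟩ : ∃ y, x = y + 1 := ⟨x - 1, by omega⟩
    have hslope := posSum_add_le_posSum_succ (by omega) (by omega) hx.le
    exact ⟨y, by omega, by simp only [Nat.dist] at hshift; omega⟩

end Caterpillar

theorem stmt10_general (n p q : ℕ) (h1 : q + 2 ≤ p) (h2 : 2 * (p + q) < n) :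
    minStatus (caterpillar n p q) < minStatus (caterpillar n (p - 1) (q + 1)) := by
  open Caterpillar in
  have h2' : 2 * (p - 1 + (q + 1)) ≤ n := by omega
  have : Nonempty (Fin n) := ⟨⟨0, by omega⟩⟩
  obtain ⟨u, hu⟩ := Nat.sInf_mem (Set.range_nonempty (status (caterpillar n (p - 1) (q + 1))))
  have hpu := pos_lt h2' u.isLt
  obtain ⟨y, hyL, hy⟩ := exists_posSum_lt h1 h2 (x := pos n (p - 1) (q + 1) u) (by omega)
  calc minStatus (caterpillar n p q) ≤ status (caterpillar n p q) ⟨y, by omega⟩ :=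
        Nat.sInf_le ⟨_, rfl⟩
    _ = posSum n p q y + (p + q) := status_of_lt h2.le hyL
    _ < posSum n (p - 1) (q + 1) (pos n (p - 1) (q + 1) u) + (p - 1 + (q + 1)) := by omega
    _ ≤ status (caterpillar n (p - 1) (q + 1)) u := posSum_add_le_status h2' u
    _ = minStatus (caterpillar n (p - 1) (q + 1)) := hu

/-- `s(C_n(p-1, q+1)) > s(C_n(p, q))` when `p ≥ q + 2` and `2(p+q) < n`. -/
theorem stmt10 (n p q : ℕ) (h1 : q + 2 ≤ p) (h2 : 2 * (p + q) < n) (h3 : 1 ≤ q) :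
    minStatus (caterpillar n p q) < minStatus (caterpillar n (p - 1) (q + 1)) :=
  stmt10_general n p q h1 h2
end

section
/- Let T be a tree on n vertices with domination number gamma, where gamma > floor(n/3). Then the diameter of T is at most 2n - 3*gamma + 1. -/
open SimpleGraph

variable {V : Type*}

/-! Choose a root `u` and sort the vertices into classes by their distance from `u` mod 3.
Each class `j`, enlarged by the dead ends (vertices with no neighbour farther from `u`) of
class `j - 1` and, for `j = 2`, by the root, dominates the graph: a vertex of class `j + 1` is
dominated by a neighbour one step closer to `u`, a vertex of class `j - 1` by a neighbour one step
farther. The three sets have total size at most `n + e + 1`, where `e` is the number of dead ends,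
so `3γ ≤ n + e + 1`. Taking `u` an end of a diametral path, each of the depths `0, …, diam - 1`
carries a vertex that is not a dead end, so `diam + e ≤ n`. -/

open Finset

lemma domNumber_le_card {G : SimpleGraph V} {S : Finset V}
    (hS : ∀ v ∉ S, ∃ u ∈ S, G.Adj u v) : domNumber G ≤ #S :=
  Nat.sInf_le ⟨S, by simpa using hS, Set.ncard_coe_finset S⟩

lemma Finset.sum_card_filter_mod_eq_card {α : Type*} (s : Finset α) (f : α → ℕ) {m : ℕ}
    (hm : 0 < m) : ∑ j ∈ range m, #{x ∈ s | f x % m = j} = #s :=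
  (card_eq_sum_card_fiberwise fun _ _ => mem_range.2 (Nat.mod_lt _ hm)).symm

namespace SimpleGraph

variable (G : SimpleGraph V)

lemma exists_adj_dist_eq_of_dist_eq_succ {u v : V} {k : ℕ} (h : G.dist u v = k + 1) :
    ∃ w, G.Adj w v ∧ G.dist u w = k := by
  have h_ne : G.dist u v ≠ 0 := by omega
  obtain ⟨p, hp⟩ := G.exists_walk_of_dist_ne_zero h_ne
  have hvu : v ≠ u := by
    rintro rfl
    simp at h
  obtain ⟨w, hvw, q, hq⟩ := p.reverse.exists_eq_cons_of_ne hvu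
  have hq_len : q.length = k := by
    have := congrArg Walk.length hq
    simp only [Walk.length_reverse, Walk.length_cons] at this
    omega
  have h_le : G.dist u w ≤ k := by simpa [hq_len] using G.dist_le q.reverse
  have := hvw.diff_dist_adj (u := u)
  exact ⟨w, hvw.symm, by omega⟩

lemma exists_dist_eq_of_le_dist {u x : V} {k : ℕ} (hk : k ≤ G.dist u x) :
    ∃ y, G.dist u y = k := by
  induction hd : G.dist u x generalizing x with
  | zero => exact ⟨x, by omega⟩
  | succ d ih =>
    rcases Nat.lt_or_eq_of_le (hd ▸ hk) with hlt | heq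
    · obtain ⟨w, -, hw⟩ := G.exists_adj_dist_eq_of_dist_eq_succ hd
      exact ih (by omega) hw
    · exact ⟨x, by omega⟩

section

variable [Fintype V] [DecidableRel G.Adj]

/-- In a tree rooted at `u`, these are the leaves of the rooted tree. -/
noncomputable def deadEnds (u : V) : Finset V :=
  ({x | ∀ w, G.Adj x w → G.dist u w ≠ G.dist u x + 1} : Finset V)

lemma exists_not_mem_deadEnds_dist_eq {u x : V} {i : ℕ} (hi : i < G.dist u x) :
    ∃ y ∉ G.deadEnds u, G.dist u y = i := by
  obtain ⟨z, hz⟩ := G.exists_dist_eq_of_le_dist (k := i + 1) hi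
  obtain ⟨y, hyz, hy⟩ := G.exists_adj_dist_eq_of_dist_eq_succ hz
  refine ⟨y, ?_, hy⟩
  simp only [deadEnds, mem_filter, mem_univ, true_and, not_forall, not_not]
  exact ⟨z, hyz, by omega⟩

lemma dist_add_card_deadEnds_le [DecidableEq V] (u x : V) :
    G.dist u x + #(G.deadEnds u) ≤ Fintype.card V := by
  have h_range : range (G.dist u x) ⊆ (G.deadEnds u)ᶜ.image (G.dist u) := by
    intro i hi
    obtain ⟨y, hy, rfl⟩ := G.exists_not_mem_deadEnds_dist_eq (mem_range.1 hi)
    exact mem_image_of_mem _ (mem_compl.2 hy)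
  have := (card_le_card h_range).trans card_image_le
  rw [card_range, card_compl] at this
  have := (G.deadEnds u).card_le_univ
  omega

variable [DecidableEq V]

/-- The last part is the root if `0 ≡ j + 1 (mod 3)`: the only vertex at distance `≡ j + 1`
without a neighbour closer to `u`. -/
noncomputable def modThreeDominatingSet (u : V) (j : ℕ) : Finset V :=
  ({x | G.dist u x % 3 = j} : Finset V) ∪ {x ∈ G.deadEnds u | (G.dist u x + 1) % 3 = j} ∪
    {x ∈ ({u} : Finset V) | (G.dist u x + 2) % 3 = j}

variable {G} in
lemma Connected.modThreeDominatingSet_dominates (hG : G.Connected) (u : V) {j : ℕ} (hj : j < 3)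
    (v : V) (hv : v ∉ G.modThreeDominatingSet u j) :
    ∃ w ∈ G.modThreeDominatingSet u j, G.Adj w v := by
  simp only [modThreeDominatingSet, mem_union, mem_filter, mem_univ,
    true_and, mem_singleton, not_or, not_and] at hv ⊢
  obtain ⟨⟨h_class, h_deadEnd⟩, h_root⟩ := hv
  rcases (by omega : (G.dist u v + 2) % 3 = j ∨ (G.dist u v + 1) % 3 = j) with h | h
  · have hvu : u ≠ v := fun huv => h_root huv.symm h
    have h_pos : 0 < G.dist u v := hG.pos_dist_of_ne hvu
    obtain ⟨w, hwv, hw⟩ :=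
      G.exists_adj_dist_eq_of_dist_eq_succ (Nat.sub_add_cancel h_pos).symm
    exact ⟨w, Or.inl (Or.inl (by omega)), hwv⟩
  · have hv : v ∉ G.deadEnds u := fun hv => h_deadEnd hv h
    simp only [deadEnds, mem_filter, mem_univ, true_and, not_forall,
      not_not] at hv
    obtain ⟨w, hvw, hw⟩ := hv
    exact ⟨w, Or.inl (Or.inl (by omega)), hvw.symm⟩

lemma sum_card_modThreeDominatingSet_le (u : V) :
    ∑ j ∈ range 3, #(G.modThreeDominatingSet u j) ≤ Fintype.card V + #(G.deadEnds u) + 1 := by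
  calc ∑ j ∈ range 3, #(G.modThreeDominatingSet u j)
      ≤ ∑ j ∈ range 3, (#{x | G.dist u x % 3 = j} +
          #{x ∈ G.deadEnds u | (G.dist u x + 1) % 3 = j} +
          #{x ∈ ({u} : Finset V) | (G.dist u x + 2) % 3 = j}) :=
        sum_le_sum fun _ _ =>
          (card_union_le _ _).trans (Nat.add_le_add_right (card_union_le _ _) _)
    _ = Fintype.card V + #(G.deadEnds u) + 1 := by
        simp only [sum_add_distrib, sum_card_filter_mod_eq_card _ _ three_pos, card_univ,
          card_singleton]

end

variable {G} in
theorem Connected.three_mul_domNumber_add_diam_le [Fintype V] (hG : G.Connected) :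
    3 * domNumber G + G.diam ≤ 2 * Fintype.card V + 1 := by
  classical
  have := hG.nonempty
  obtain ⟨u, v, huv⟩ := G.exists_dist_eq_diam
  have h_dom : ∀ j ∈ range 3, domNumber G ≤ #(G.modThreeDominatingSet u j) := fun j hj =>
    domNumber_le_card (hG.modThreeDominatingSet_dominates u (mem_range.1 hj))
  have h_sum := (card_nsmul_le_sum _ _ _ h_dom).trans (G.sum_card_modThreeDominatingSet_le u)
  have h_diam := G.dist_add_card_deadEnds_le u v
  rw [card_range, smul_eq_mul] at h_sum
  omega

end SimpleGraph

theorem stmt12_general [Fintype V] (T : SimpleGraph V) (n γ : ℕ)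
    (hn : Fintype.card V = n) (hT : T.IsTree)
    (hγ : domNumber T = γ) :
    (T.diam : ℤ) ≤ 2 * (n : ℤ) - 3 * (γ : ℤ) + 1 := by
  have := hT.connected.three_mul_domNumber_add_diam_le
  rw [hn, hγ] at this
  omega

/-- A tree on `n` vertices with domination number `γ > ⌊n/3⌋` has diameter at
most `2n - 3γ + 1`. -/
theorem stmt12 [Fintype V] (T : SimpleGraph V) (n γ : ℕ)
    (hn : Fintype.card V = n) (hT : T.IsTree)
    (hγ : domNumber T = γ) (h : n / 3 < γ) :
    (T.diam : ℤ) ≤ 2 * (n : ℤ) - 3 * (γ : ℤ) + 1 :=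
  stmt12_general T n γ hn hT hγ
end

section
/- The minimum status of the tree A_{n,m} equals n + m - 2, for integers n >= 2 and 1 <= m <= floor(n/2). -/
open SimpleGraph

variable {V : Type*}

/-!
In a connected graph a vertex other than `u` is at distance `1` from `u` if it is adjacent to `u`
and at distance at least `2` otherwise, so `status u + deg u ≥ 2 (|V| - 1)`, with equality when
`u` has eccentricity at most `2`. The centre of `A_{n,m}` has the maximum degree `n - m` and
eccentricity `2`, so the minimum status is `2 (n - 1) - (n - m) = n + m - 2`.
-/

namespace SimpleGraph

variable [Fintype V] (G : SimpleGraph V) [DecidableRel G.Adj]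

lemma sum_dist_add_adj_add_self (u : V) [DecidableEq V] :
    ∑ v, (G.dist u v + (if G.Adj u v then 1 else 0) + if u = v then 2 else 0) =
      status G u + G.degree u + 2 := by
  simp [Finset.sum_add_distrib, status, Finset.sum_boole, ← card_neighborFinset_eq_degree,
    neighborFinset_eq_filter]

lemma two_mul_card_le_status_add_degree (hG : G.Connected) (u : V) :
    2 * Fintype.card V ≤ status G u + G.degree u + 2 := by
  classical
  rw [← G.sum_dist_add_adj_add_self, mul_comm, ← smul_eq_mul, ← Finset.card_univ,
    ← Finset.sum_const]
  refine Finset.sum_le_sum fun v _ => ?_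
  by_cases huv : u = v
  · simp [huv]
  by_cases hadj : G.Adj u v
  · simp [hadj, huv, dist_eq_one_iff_adj.mpr hadj]
  · have hpos := hG.pos_dist_of_ne huv
    have hne : G.dist u v ≠ 1 := fun h => hadj (dist_eq_one_iff_adj.mp h)
    simp only [hadj, huv, if_false]
    omega

lemma status_add_degree_le (u : V) (hu : ∀ v, G.dist u v ≤ 2) :
    status G u + G.degree u + 2 ≤ 2 * Fintype.card V := by
  classical
  rw [← G.sum_dist_add_adj_add_self, mul_comm, ← smul_eq_mul, ← Finset.card_univ,
    ← Finset.sum_const]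
  refine Finset.sum_le_sum fun v _ => ?_
  by_cases huv : u = v
  · simp [huv]
  by_cases hadj : G.Adj u v
  · simp [hadj, huv, dist_eq_one_iff_adj.mpr hadj]
  · simpa [hadj, huv] using hu v

lemma minStatus_add_degree (hG : G.Connected) (u : V) (hu : ∀ v, G.dist u v ≤ 2)
    (hmax : ∀ v, G.degree v ≤ G.degree u) :
    minStatus G + G.degree u + 2 = 2 * Fintype.card V := by
  have hleast : IsLeast (Set.range (status G)) (2 * Fintype.card V - 2 - G.degree u) := by
    refine ⟨⟨u, ?_⟩, ?_⟩
    · have := G.two_mul_card_le_status_add_degree hG u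
      have := G.status_add_degree_le u hu
      omega
    · rintro _ ⟨v, rfl⟩
      have := G.two_mul_card_le_status_add_degree hG v
      have := hmax v
      omega
  have := G.status_add_degree_le u hu
  rw [minStatus, hleast.csInf_eq]
  omega

end SimpleGraph

section TreeA

variable {n m : ℕ}

lemma treeA_adj_iff (a b : Fin n) :
    (treeA n m).Adj a b ↔ (a : ℕ) ≠ b ∧
      (((a : ℕ) = 0 ∧ 1 ≤ (b : ℕ) ∧ (b : ℕ) ≤ n - m) ∨
        (1 ≤ (a : ℕ) ∧ (a : ℕ) ≤ m - 1 ∧ (b : ℕ) = n - m + a) ∨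
        ((b : ℕ) = 0 ∧ 1 ≤ (a : ℕ) ∧ (a : ℕ) ≤ n - m) ∨
        (1 ≤ (b : ℕ) ∧ (b : ℕ) ≤ m - 1 ∧ (a : ℕ) = n - m + b)) := by
  simp only [treeA, fromRel_adj, ne_eq, Fin.val_inj, or_assoc]

attribute [local instance] Classical.propDecidable

lemma treeA_degree_le (hm : 2 * m ≤ n) (u : Fin n) : (treeA n m).degree u ≤ n - m := by
  obtain ⟨T, hT, hcard⟩ : ∃ T : Finset ℕ,
      (∀ v : Fin n, (treeA n m).Adj u v → (v : ℕ) ∈ T) ∧ T.card ≤ n - m := by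
    rcases Nat.eq_zero_or_pos (u : ℕ) with h0 | h0
    · refine ⟨Finset.Icc 1 (n - m), fun v hv => ?_, by simp⟩
      rw [treeA_adj_iff] at hv
      simp only [Finset.mem_Icc]
      omega
    by_cases hpend : (u : ℕ) ≤ m - 1
    · refine ⟨{0, n - m + u}, fun v hv => ?_, Finset.card_le_two.trans (by omega)⟩
      rw [treeA_adj_iff] at hv
      simp only [Finset.mem_insert, Finset.mem_singleton]
      omega
    by_cases hleaf : (u : ℕ) ≤ n - m
    · refine ⟨{0}, fun v hv => ?_, by simp; omega⟩
      rw [treeA_adj_iff] at hv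
      simp only [Finset.mem_singleton]
      omega
    · refine ⟨{(u : ℕ) - (n - m)}, fun v hv => ?_, by simp; omega⟩
      rw [treeA_adj_iff] at hv
      simp only [Finset.mem_singleton]
      omega
  rw [← card_neighborFinset_eq_degree]
  exact (Finset.card_le_card_of_injOn Fin.val
    (fun v hv => hT v ((mem_neighborFinset _ _ _).mp hv)) Fin.val_injective.injOn).trans hcard

variable [NeZero n]

lemma treeA_adj_zero_iff (v : Fin n) :
    (treeA n m).Adj 0 v ↔ 1 ≤ (v : ℕ) ∧ (v : ℕ) ≤ n - m := by
  rw [treeA_adj_iff, Fin.val_zero]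
  omega

lemma exists_walk_treeA_zero (hm : 2 * m ≤ n) (v : Fin n) :
    ∃ p : (treeA n m).Walk 0 v, p.length ≤ 2 := by
  rcases Nat.eq_zero_or_pos (v : ℕ) with hv | hv
  · obtain rfl : v = 0 := Fin.ext hv
    exact ⟨Walk.nil, by simp⟩
  by_cases hleaf : (v : ℕ) ≤ n - m
  · exact ⟨((treeA_adj_zero_iff v).mpr ⟨hv, hleaf⟩).toWalk, by simp⟩
  · let w : Fin n := ⟨v - (n - m), by omega⟩
    have h0w : (treeA n m).Adj 0 w :=
      (treeA_adj_zero_iff w).mpr ⟨by simp [w]; omega, by simp [w]; omega⟩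
    have hwv : (treeA n m).Adj w v := by rw [treeA_adj_iff]; simp [w]; omega
    exact ⟨.cons h0w (.cons hwv .nil), by simp⟩

lemma treeA_connected (hm : 2 * m ≤ n) : (treeA n m).Connected :=
  (connected_iff_exists_forall_reachable _).mpr
    ⟨0, fun v => (exists_walk_treeA_zero hm v).elim fun p _ => p.reachable⟩

lemma treeA_dist_zero_le_two (hm : 2 * m ≤ n) (v : Fin n) : (treeA n m).dist 0 v ≤ 2 :=
  (exists_walk_treeA_zero hm v).elim fun p hp => (dist_le p).trans hp

lemma treeA_degree_zero (hm : 1 ≤ m) : (treeA n m).degree 0 = n - m := by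
  have : ((treeA n m).neighborFinset 0).map Fin.valEmbedding = Finset.Icc 1 (n - m) := by
    ext x
    simp only [Finset.mem_map, mem_neighborFinset, treeA_adj_zero_iff, Fin.valEmbedding_apply,
      Finset.mem_Icc]
    exact ⟨fun ⟨v, hv, hvx⟩ => hvx ▸ hv, fun hx => ⟨⟨x, by omega⟩, hx, rfl⟩⟩
  rw [← card_neighborFinset_eq_degree, ← Finset.card_map Fin.valEmbedding, this, Nat.card_Icc,
    Nat.add_sub_cancel]

end TreeA

/-- The minimum status of `A_{n,m}` equals `n + m - 2`. -/
theorem stmt16 (n m : ℕ) (hn : 2 ≤ n) (hm1 : 1 ≤ m) (hm2 : 2 * m ≤ n) :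
    minStatus (treeA n m) = n + m - 2 := by
  have : NeZero n := ⟨by omega⟩
  classical
  have h := (treeA n m).minStatus_add_degree (treeA_connected hm2) 0 (treeA_dist_zero_le_two hm2)
    (fun v => (treeA_degree_le hm2 v).trans_eq (treeA_degree_zero hm1).symm)
  rw [treeA_degree_zero hm1, Fintype.card_fin] at h
  omega
end
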